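/- arXiv:1607.03790 — 10 statements merged into one kernel-verified Lean document; each statement's English description precedes it below -/
import Mathlib

section
/- Let V be a virtually cyclic group. Then there exists an element v₀ ∈ V such that for every element v ∈ V of infinite order there exist nonzero integers p₀, p with v₀^{p₀} = v^p and p dividing p₀. -/
/-!
Let `K` be the normal core of a cyclic subgroup of finite index and `C` the centralizer of `K`.
An element `v` of infinite order conjugates a generator `g` of `K` to some `g ^ s`, while it
fixes its own power `v ^ N = g ^ m` with `m ≠ 0`; hence `s = 1` and `v ∈ C`. Inside `C` the
subgroup `K` is central of finite index `n`, so by the transfer `c ↦ c ^ n` is a homomorphism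
from `C` into the cyclic group `K`. Its image is generated by the image of a single `c₀`, and
then every `v` of infinite order satisfies `v ^ n = c₀ ^ (n * t)` with `t ≠ 0`.
-/

def IsVirtuallyCyclic (G : Type*) [Group G] : Prop :=
  ∃ H : Subgroup G, IsCyclic H ∧ H.FiniteIndex

open Subgroup

open scoped IsMulCommutative in
theorem MonoidHom.transfer_id_eq_pow_index_of_le_center {G : Type*} [Group G] {H : Subgroup G}
    [IsMulCommutative H] [H.FiniteIndex] (hH : H ≤ center G) (g : G) :
    (transfer (MonoidHom.id H) g : G) = g ^ H.index := by
  rw [transfer_eq_pow (MonoidHom.id H) g fun k g₀ hk =>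
    mul_right_cancel (((hH hk).comm g₀).eq.trans (by group))]
  rfl

theorem Commute.of_conj_mem_zpowers_of_pow_eq_zpow {G : Type*} [Group G] {g v : G}
    (hg : ¬IsOfFinOrder g) (hconj : v * g * v⁻¹ ∈ zpowers g) {n : ℕ} {m : ℤ} (hm : m ≠ 0)
    (hvg : v ^ n = g ^ m) : Commute v g := by
  obtain ⟨s, hs⟩ := mem_zpowers_iff.1 hconj
  have hsm : g ^ (s * m) = g ^ m := by
    rw [zpow_mul, hs, conj_zpow, ← hvg, ← pow_succ', pow_succ, mul_inv_cancel_right]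
  have hs1 : s = 1 := by
    simpa [hm] using injective_zpow_iff_not_isOfFinOrder.2 hg hsm
  rw [hs1, zpow_one] at hs
  exact mul_inv_eq_iff_eq_mul.1 hs.symm

namespace Subgroup

open scoped IsMulCommutative in
theorem exists_pow_index_eq_zpow_pow_index_of_le_center {G : Type*} [Group G] {H : Subgroup G}
    [IsCyclic H] [H.FiniteIndex] (hH : H ≤ center G) :
    ∃ c₀ : G, ∀ v : G, ∃ t : ℤ, v ^ H.index = (c₀ ^ t) ^ H.index := by
  let ψ := MonoidHom.transfer (MonoidHom.id H)
  obtain ⟨⟨_, c₀, rfl⟩, hc₀⟩ := IsCyclic.exists_generator (α := ψ.range)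
  refine ⟨c₀, fun v => ?_⟩
  obtain ⟨t, ht⟩ := mem_zpowers_iff.1 (hc₀ ⟨ψ v, v, rfl⟩)
  refine ⟨t, ?_⟩
  simp only [← MonoidHom.transfer_id_eq_pow_index_of_le_center hH, map_zpow]
  exact congrArg (fun x : ψ.range => ((x : H) : G)) ht.symm

theorem mem_centralizer_of_not_isOfFinOrder {G : Type*} [Group G] {K : Subgroup G} [K.Normal]
    [IsCyclic K] [K.FiniteIndex] {v : G} (hv : ¬IsOfFinOrder v) : v ∈ centralizer K := by
  obtain ⟨g, rfl⟩ := K.isCyclic_iff_exists_zpowers_eq_top.1 ‹_›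
  obtain ⟨m, hm⟩ := mem_zpowers_iff.1 (pow_index_mem (zpowers g) v)
  have hN : (zpowers g).index ≠ 0 := FiniteIndex.index_ne_zero
  have hg : ¬IsOfFinOrder g := fun hg => hv ((hm ▸ hg.zpow).of_pow hN)
  have hm0 : m ≠ 0 := by
    rintro rfl
    exact hv (isOfFinOrder_iff_pow_eq_one.2 ⟨_, Nat.pos_of_ne_zero hN, by simpa using hm.symm⟩)
  have hvg := Commute.of_conj_mem_zpowers_of_pow_eq_zpow hg
    (‹(zpowers g).Normal›.conj_mem g (mem_zpowers g) v) hm0 hm.symm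
  rw [mem_centralizer_iff]
  rintro _ ⟨k, rfl⟩
  exact (hvg.zpow_right k).eq.symm

theorem subgroupOf_centralizer_le_center {G : Type*} [Group G] (K : Subgroup G) :
    K.subgroupOf (centralizer (K : Set G)) ≤ center (centralizer (K : Set G)) := by
  rintro ⟨x, hx⟩ hxK
  rw [mem_center_iff]
  rintro ⟨y, hy⟩
  exact Subtype.ext (mem_centralizer_iff.1 hy x hxK).symm

end Subgroup

theorem stmt_1 {V : Type*} [Group V] (hV : IsVirtuallyCyclic V) :
    ∃ v₀ : V, ∀ v : V, ¬ IsOfFinOrder v →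
      ∃ p₀ p : ℤ, p₀ ≠ 0 ∧ p ≠ 0 ∧ v₀ ^ p₀ = v ^ p ∧ p ∣ p₀ := by
  obtain ⟨H, _, _⟩ := hV
  let K := H.normalCore
  have : IsCyclic K := isCyclic_of_le H.normalCore_le
  let C := centralizer (K : Set V)
  have : IsCyclic (K.subgroupOf C) := (subgroupOfEquivOfLe (le_centralizer K)).isCyclic.2 ‹_›
  obtain ⟨c₀, hc₀⟩ :=
    exists_pow_index_eq_zpow_pow_index_of_le_center (subgroupOf_centralizer_le_center K)
  refine ⟨c₀, fun v hv => ?_⟩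
  obtain ⟨t, ht⟩ := hc₀ ⟨v, mem_centralizer_of_not_isOfFinOrder hv⟩
  set n := (K.subgroupOf C).index
  have hn : n ≠ 0 := FiniteIndex.index_ne_zero
  replace ht : v ^ n = ((c₀ : V) ^ t) ^ n := by
    simpa only [SubgroupClass.coe_pow, SubgroupClass.coe_zpow] using congrArg Subtype.val ht
  have ht0 : t ≠ 0 := by
    rintro rfl
    exact hv (isOfFinOrder_iff_pow_eq_one.2 ⟨n, Nat.pos_of_ne_zero hn, by simpa using ht⟩)
  refine ⟨n * t, n, mul_ne_zero (by exact_mod_cast hn) ht0, by exact_mod_cast hn, ?_,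
    dvd_mul_right _ _⟩
  rw [mul_comm, zpow_mul, zpow_natCast, zpow_natCast, ht]
end

section
/- A torsion-free group G has BVC if and only if there exist finitely many elements g₁, ..., gₙ in G such that every element of G is conjugate to a power of some gᵢ. -/
def HasBVC (G : Type*) [Group G] : Prop :=
  ∃ S : Finset (Subgroup G), (∀ V ∈ S, IsVirtuallyCyclic V) ∧
    ∀ W : Subgroup G, IsVirtuallyCyclic W →
      ∃ V ∈ S, ∃ g : G, W.map (MulAut.conj g).toMonoidHom ≤ V

open Subgroup

section

variable {G : Type*} [Group G]

theorem IsCyclic.isVirtuallyCyclic [IsCyclic G] : IsVirtuallyCyclic G :=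
  ⟨⊤, topEquiv.isCyclic.mpr ‹_›, inferInstance⟩

theorem Subgroup.map_conj_zpowers (g x : G) :
    (zpowers x).map (MulAut.conj g).toMonoidHom = zpowers (g * x * g⁻¹) := by
  simp [MonoidHom.map_zpowers]

theorem IsVirtuallyCyclic.exists_zpowers_normal_finiteIndex (h : IsVirtuallyCyclic G) :
    ∃ d : G, (zpowers d).Normal ∧ (zpowers d).FiniteIndex := by
  obtain ⟨H, hH, hfi⟩ := h
  have : IsCyclic H.normalCore := isCyclic_of_le H.normalCore_le
  obtain ⟨d, hd⟩ := H.normalCore.isCyclic_iff_exists_zpowers_eq_top.mp this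
  exact ⟨d, hd ▸ H.normalCore_normal, hd ▸ inferInstance⟩

theorem Subgroup.not_isOfFinOrder_of_ne_one (htf : ∀ g : G, g ≠ 1 → ¬IsOfFinOrder g)
    (H : Subgroup G) (h : H) (hh : h ≠ 1) : ¬IsOfFinOrder h :=
  fun hfin => htf h (by simpa using hh) (H.subtype.isOfFinOrder hfin)

theorem eq_one_of_pow_eq_one_of_not_isOfFinOrder (htf : ∀ g : G, g ≠ 1 → ¬IsOfFinOrder g)
    {g : G} {n : ℕ} (hn : n ≠ 0) (h : g ^ n = 1) : g = 1 :=
  by_contra fun hg => htf g hg (isOfFinOrder_iff_pow_eq_one.mpr ⟨n, Nat.pos_of_ne_zero hn, h⟩)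

/-- With `n = [G : ⟨d⟩]`, `v` commutes with `v ^ n = d ^ j`; writing `v d v⁻¹ = d ^ m` this gives
`d ^ (m j) = d ^ j`, so `m = 1` unless `j = 0`, and `j = 0` forces `v = 1`. -/
theorem mem_center_of_zpowers_normal_finiteIndex (htf : ∀ g : G, g ≠ 1 → ¬IsOfFinOrder g)
    {d : G} (hN : (zpowers d).Normal) (hfi : (zpowers d).FiniteIndex) : d ∈ center G := by
  rw [mem_center_iff]
  intro v
  obtain ⟨j, hj⟩ := mem_zpowers_iff.mp ((zpowers d).pow_index_mem v)
  obtain ⟨m, hm⟩ := mem_zpowers_iff.mp (hN.conj_mem d (mem_zpowers d) v)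
  obtain rfl | hd := eq_or_ne d 1
  · simp
  obtain rfl | hj0 := eq_or_ne j 0
  · rw [zpow_zero, eq_comm] at hj
    simp [eq_one_of_pow_eq_one_of_not_isOfFinOrder htf hfi.index_ne_zero hj]
  have hmj : d ^ (m * j) = d ^ j := by
    rw [zpow_mul, hm, conj_zpow, hj, mul_inv_eq_iff_eq_mul, pow_mul_comm']
  have hm1 : m = 1 := by
    simpa [hj0] using injective_zpow_iff_not_isOfFinOrder.mpr (htf d hd) hmj
  rw [hm1, zpow_one, eq_mul_inv_iff_mul_eq] at hm
  exact hm.symm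

open scoped IsMulCommutative in
/-- Schur's argument: transfer into the central subgroup `⟨d⟩` is `g ↦ g ^ index`. -/
theorem isCyclic_of_mem_center_of_zpowers_finiteIndex (htf : ∀ g : G, g ≠ 1 → ¬IsOfFinOrder g)
    {d : G} (hd : d ∈ center G) (hfi : (zpowers d).FiniteIndex) : IsCyclic G := by
  have hcentral : ∀ (k : ℕ) (g₀ g : G), g₀⁻¹ * g ^ k * g₀ ∈ zpowers d →
      g₀⁻¹ * g ^ k * g₀ = g ^ k := by
    intro k g₀ g hk
    have hx := mem_center_iff.mp (zpowers_le.mpr hd hk) g₀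
    exact mul_right_cancel (hx.symm.trans (by group))
  let f := (MonoidHom.id (zpowers d)).transfer
  refine isCyclic_of_injective f ((injective_iff_map_eq_one f).mpr fun g hg => ?_)
  rw [MonoidHom.transfer_eq_pow _ g (fun k g₀ => hcentral k g₀ g)] at hg
  exact eq_one_of_pow_eq_one_of_not_isOfFinOrder htf hfi.index_ne_zero
    (congrArg Subtype.val hg)

theorem IsVirtuallyCyclic.isCyclic (htf : ∀ g : G, g ≠ 1 → ¬IsOfFinOrder g)
    (h : IsVirtuallyCyclic G) : IsCyclic G :=
  let ⟨_, hN, hfi⟩ := h.exists_zpowers_normal_finiteIndex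
  isCyclic_of_mem_center_of_zpowers_finiteIndex htf
    (mem_center_of_zpowers_normal_finiteIndex htf hN hfi) hfi

theorem HasBVC.exists_finset_isConj_zpow (htf : ∀ g : G, g ≠ 1 → ¬IsOfFinOrder g)
    (h : HasBVC G) : ∃ s : Finset G, ∀ x : G, ∃ g ∈ s, ∃ k : ℤ, IsConj (g ^ k) x := by
  classical
  obtain ⟨S, hSvc, hS⟩ := h
  have hgen : ∀ V ∈ S, ∃ v : G, zpowers v = V := fun V hV =>
    V.isCyclic_iff_exists_zpowers_eq_top.mp
      ((hSvc V hV).isCyclic (V.not_isOfFinOrder_of_ne_one htf))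
  choose! gen hgen using hgen
  refine ⟨S.image gen, fun x => ?_⟩
  obtain ⟨V, hV, g, hle⟩ := hS (zpowers x) IsCyclic.isVirtuallyCyclic
  rw [map_conj_zpowers, zpowers_le, ← hgen V hV, mem_zpowers_iff] at hle
  obtain ⟨k, hk⟩ := hle
  exact ⟨gen V, Finset.mem_image_of_mem gen hV, k, (isConj_iff.mpr ⟨g, hk.symm⟩).symm⟩

theorem hasBVC_of_exists_finset_isConj_zpow (htf : ∀ g : G, g ≠ 1 → ¬IsOfFinOrder g)
    (h : ∃ s : Finset G, ∀ x : G, ∃ g ∈ s, ∃ k : ℤ, IsConj (g ^ k) x) : HasBVC G := by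
  classical
  obtain ⟨s, hs⟩ := h
  refine ⟨s.image zpowers, ?_, fun W hW => ?_⟩
  · simp only [Finset.mem_image]
    rintro _ ⟨g, -, rfl⟩
    exact IsCyclic.isVirtuallyCyclic
  obtain ⟨w, rfl⟩ := W.isCyclic_iff_exists_zpowers_eq_top.mp
    (hW.isCyclic (W.not_isOfFinOrder_of_ne_one htf))
  obtain ⟨g, hg, k, hconj⟩ := hs w
  obtain ⟨c, hc⟩ := isConj_iff.mp hconj.symm
  refine ⟨zpowers g, Finset.mem_image_of_mem zpowers hg, c, ?_⟩
  rw [map_conj_zpowers, hc]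
  exact zpowers_le.mpr (zpow_mem (mem_zpowers g) k)

end

theorem stmt_3 {G : Type*} [Group G] (htf : ∀ g : G, g ≠ 1 → ¬ IsOfFinOrder g) :
    HasBVC G ↔ ∃ s : Finset G, ∀ x : G, ∃ g ∈ s, ∃ k : ℤ, IsConj (g ^ k) x :=
  ⟨HasBVC.exists_finset_isConj_zpow htf, hasBVC_of_exists_finset_isConj_zpow htf⟩
end

section
/- If a group G has BVC, then every finite index subgroup of G also has BVC. -/
/-!
If `V₁, …, Vₙ` witness BVC for `G` and `t₁, …, tₘ` is a transversal of `G ⧸ H`, then the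
subgroups `H ∩ tⱼ⁻¹ Vᵢ tⱼ` witness BVC for `H`. They are virtually cyclic because subgroups of
virtually cyclic groups are. A virtually cyclic `W ≤ H` is virtually cyclic in `G`, so
`g W g⁻¹ ≤ Vᵢ` for some `g`; writing `g = tⱼ h` with `h ∈ H` gives `h W h⁻¹ ≤ H ∩ tⱼ⁻¹ Vᵢ tⱼ`.
-/

theorem MonoidHom.subgroupComap_injective_of_injective {K G : Type*} [Group K] [Group G]
    {f : K →* G} (hf : Function.Injective f) (V : Subgroup G) :
    Function.Injective (f.subgroupComap V) :=
  fun _ _ h => Subtype.ext (hf (congrArg Subtype.val h))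

theorem IsVirtuallyCyclic.of_injective {K G : Type*} [Group K] [Group G] {f : K →* G}
    (hf : Function.Injective f) (hG : IsVirtuallyCyclic G) : IsVirtuallyCyclic K := by
  obtain ⟨C, hC, hCfin⟩ := hG
  refine ⟨C.comap f, isCyclic_of_injective (f.subgroupComap C)
    (f.subgroupComap_injective_of_injective hf C), ⟨?_⟩⟩
  rw [Subgroup.index_comap]
  exact Subgroup.isFiniteRelIndex_of_finiteIndex.relIndex_ne_zero

theorem IsVirtuallyCyclic.subgroup_comap {K G : Type*} [Group K] [Group G] {f : K →* G}
    (hf : Function.Injective f) {V : Subgroup G} (hV : IsVirtuallyCyclic V) :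
    IsVirtuallyCyclic (V.comap f) :=
  hV.of_injective (f.subgroupComap_injective_of_injective hf V)

theorem IsVirtuallyCyclic.subgroup_map {K G : Type*} [Group K] [Group G] {f : K →* G}
    (hf : Function.Injective f) {W : Subgroup K} (hW : IsVirtuallyCyclic W) :
    IsVirtuallyCyclic (W.map f) :=
  hW.of_injective (f := (W.equivMapOfInjective f hf).symm.toMonoidHom)
    (W.equivMapOfInjective f hf).symm.injective

theorem HasBVC.of_finite {G : Type*} [Group G] {T : Set (Subgroup G)} (hT : T.Finite)
    (hvc : ∀ V ∈ T, IsVirtuallyCyclic V)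
    (hcover : ∀ W : Subgroup G, IsVirtuallyCyclic W →
      ∃ V ∈ T, ∃ g : G, W.map (MulAut.conj g).toMonoidHom ≤ V) :
    HasBVC G :=
  ⟨hT.toFinset, by simpa using hvc, by simpa using hcover⟩

section ConjPullback

variable {G : Type*} [Group G]

def conjPullback (H : Subgroup G) (t : G) (V : Subgroup G) : Subgroup H :=
  V.comap ((MulAut.conj t).toMonoidHom.comp H.subtype)

theorem isVirtuallyCyclic_conjPullback {H : Subgroup G} (t : G) {V : Subgroup G} (hV : IsVirtuallyCyclic V) :
    IsVirtuallyCyclic (conjPullback H t V) :=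
  hV.subgroup_comap ((MulAut.conj t).injective.comp H.subtype_injective)

theorem map_conj_le_conjPullback {H : Subgroup G} {W : Subgroup H} {V : Subgroup G} {t g : G}
    (htg : t⁻¹ * g ∈ H) (hW : (W.map H.subtype).map (MulAut.conj g).toMonoidHom ≤ V) :
    W.map (MulAut.conj (⟨t⁻¹ * g, htg⟩ : H)).toMonoidHom ≤ conjPullback H t V := by
  have hcomp : ((MulAut.conj t).toMonoidHom.comp H.subtype).comp
      (MulAut.conj (⟨t⁻¹ * g, htg⟩ : H)).toMonoidHom =
      (MulAut.conj g).toMonoidHom.comp H.subtype := by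
    ext x
    simp only [MonoidHom.comp_apply, MulEquiv.coe_toMonoidHom, MulAut.conj_apply,
      Subgroup.coe_subtype, Subgroup.coe_mul, Subgroup.coe_inv]
    group
  rwa [conjPullback, ← Subgroup.map_le_iff_le_comap, Subgroup.map_map, hcomp,
    ← Subgroup.map_map]

end ConjPullback

theorem stmt_4 {G : Type*} [Group G] (H : Subgroup G) [H.FiniteIndex]
    (hG : HasBVC G) : HasBVC H := by
  obtain ⟨S, hSvc, hScover⟩ := hG
  refine HasBVC.of_finite
    (Set.finite_range fun p : S × (G ⧸ H) => conjPullback H p.2.out p.1) ?_ ?_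
  · rintro _ ⟨⟨V, q⟩, rfl⟩
    exact isVirtuallyCyclic_conjPullback _ (hSvc V V.2)
  · intro W hW
    obtain ⟨V, hV, g, hg⟩ := hScover _ (hW.subgroup_map H.subtype_injective)
    have htg : (g : G ⧸ H).out⁻¹ * g ∈ H := QuotientGroup.eq.mp (QuotientGroup.out_eq' _)
    exact ⟨_, ⟨(⟨V, hV⟩, g), rfl⟩, _, map_conj_le_conjPullback htg hg⟩
end

section
/- Let π : G → Q be a surjective group homomorphism where Q is torsion-free. If Q does not have BVC, then G does not have BVC. -/
/-!
In a torsion-free group a virtually cyclic subgroup is cyclic. Indeed, a finite-index normal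
cyclic subgroup `⟨c⟩` is central: if `g` inverted `c`, then `g` would both fix and invert the
element `g ^ n ∈ ⟨c⟩` (`n` the index), forcing `g = 1` and then `c = 1`. Once `⟨c⟩` is central,
the transfer `g ↦ g ^ n` is an injective homomorphism into `⟨c⟩`.

So every virtually cyclic subgroup of `Q` is `⟨π g⟩ = π ⟨g⟩`, and the images under `π` of a
finite BVC family of `G` form one for `Q`, with the conjugators pushed forward by `π`.
-/

open Subgroup

section TorsionFree

variable {W : Type*} [Group W]

lemma eq_one_of_pow_eq_one (htf : ∀ g : W, IsOfFinOrder g → g = 1) {g : W} {n : ℕ}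
    (hn : n ≠ 0) (h : g ^ n = 1) : g = 1 :=
  htf g (isOfFinOrder_iff_pow_eq_one.mpr ⟨n, Nat.pos_of_ne_zero hn, h⟩)

lemma eq_one_of_eq_inv (htf : ∀ g : W, IsOfFinOrder g → g = 1) {g : W} (h : g = g⁻¹) :
    g = 1 :=
  eq_one_of_pow_eq_one htf two_ne_zero (by rw [sq, mul_eq_one_iff_eq_inv, ← h])

lemma conj_eq_self_or_inv_of_normal_zpowers {c : W} [(zpowers c).Normal] (hc : ¬IsOfFinOrder c)
    (g : W) : g * c * g⁻¹ = c ∨ g * c * g⁻¹ = c⁻¹ := by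
  have h := Normal.map_conj_eq (zpowers c) g
  rw [MonoidHom.map_zpowers, eq_comm, zpowers_eq_zpowers_iff hc] at h
  exact h.imp Eq.symm Eq.symm

lemma eq_one_of_conj_eq_inv (htf : ∀ g : W, IsOfFinOrder g → g = 1) {c g : W}
    (h : g * c * g⁻¹ = c⁻¹) {n : ℕ} (hn : n ≠ 0) (hgn : g ^ n ∈ zpowers c) : c = 1 := by
  obtain ⟨j, hj⟩ := mem_zpowers_iff.mp hgn
  have hfix : g * c ^ j * g⁻¹ = c ^ j := by rw [hj]; group
  have hinv : g * c ^ j * g⁻¹ = (c ^ j)⁻¹ := by rw [← conj_zpow, h, inv_zpow]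
  have hgn1 : g ^ n = 1 := by rw [← hj, eq_one_of_eq_inv htf (hfix.symm.trans hinv)]
  rw [eq_one_of_pow_eq_one htf hn hgn1, one_mul, inv_one, mul_one] at h
  exact eq_one_of_eq_inv htf h

lemma zpowers_le_center (htf : ∀ g : W, IsOfFinOrder g → g = 1) (c : W) [(zpowers c).Normal]
    [(zpowers c).FiniteIndex] : zpowers c ≤ center W := by
  rw [zpowers_le, mem_center_iff]
  intro g
  by_cases hc : c = 1
  · rw [hc, one_mul, mul_one]
  rcases conj_eq_self_or_inv_of_normal_zpowers (mt (htf c) hc) g with h | h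
  · exact mul_inv_eq_iff_eq_mul.mp h
  · exact absurd (eq_one_of_conj_eq_inv htf h FiniteIndex.index_ne_zero (pow_index_mem _ g)) hc

open scoped IsMulCommutative in
lemma isCyclic_of_le_center (htf : ∀ g : W, IsOfFinOrder g → g = 1) (N : Subgroup W)
    [IsCyclic N] [N.FiniteIndex] (hN : N ≤ center W) : IsCyclic W := by
  have transfer_apply (g : W) :
      (MonoidHom.transfer (MonoidHom.id N) g : W) = g ^ N.index := by
    rw [MonoidHom.transfer_eq_pow (MonoidHom.id N) g fun k g₀ hk => ?_]
    · rfl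
    · refine (eq_mul_inv_of_mul_eq (mem_center_iff.mp (hN hk) g₀).symm).trans ?_
      group
  refine isCyclic_of_injective (MonoidHom.transfer (MonoidHom.id N))
    ((injective_iff_map_eq_one _).mpr fun g hg => ?_)
  exact eq_one_of_pow_eq_one htf FiniteIndex.index_ne_zero
    (by rw [← transfer_apply, hg, OneMemClass.coe_one])

lemma IsVirtuallyCyclic.isCyclic_of_torsionFree (htf : ∀ g : W, IsOfFinOrder g → g = 1)
    (h : IsVirtuallyCyclic W) : IsCyclic W := by
  obtain ⟨H, hH, hHfi⟩ := h
  have : IsCyclic H.normalCore := isCyclic_of_le H.normalCore_le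
  obtain ⟨c, hc⟩ := (H.normalCore.isCyclic_iff_exists_zpowers_eq_top).mp this
  have : (zpowers c).Normal := hc ▸ H.normalCore_normal
  have : (zpowers c).FiniteIndex := hc ▸ inferInstance
  exact isCyclic_of_le_center htf _ (zpowers_le_center htf c)

end TorsionFree

lemma IsVirtuallyCyclic.of_isCyclic {G : Type*} [Group G] [IsCyclic G] : IsVirtuallyCyclic G :=
  ⟨⊤, inferInstance, inferInstance⟩

lemma IsVirtuallyCyclic.of_surjective {G H : Type*} [Group G] [Group H] {f : G →* H}
    (hf : Function.Surjective f) (h : IsVirtuallyCyclic G) : IsVirtuallyCyclic H := by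
  obtain ⟨K, hK, hKfi⟩ := h
  refine ⟨K.map f, isCyclic_of_surjective _ (f.subgroupMap_surjective K), ⟨fun h0 => ?_⟩⟩
  exact hKfi.index_ne_zero (Nat.eq_zero_of_zero_dvd (h0 ▸ index_map_dvd K hf))

lemma map_conj_map_eq_map_map_conj {G Q : Type*} [Group G] [Group Q] (f : G →* Q)
    (K : Subgroup G) (x : G) :
    (K.map f).map (MulAut.conj (f x)).toMonoidHom = (K.map (MulAut.conj x).toMonoidHom).map f := by
  rw [map_map, map_map]
  congr 1
  ext y
  simp

lemma HasBVC.of_map {G Q : Type*} [Group G] [Group Q] (f : G →* Q)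
    (hlift : ∀ U : Subgroup Q, IsVirtuallyCyclic U →
      ∃ K : Subgroup G, IsVirtuallyCyclic K ∧ K.map f = U)
    (hG : HasBVC G) : HasBVC Q := by
  classical
  obtain ⟨S, hSvc, hS⟩ := hG
  refine ⟨S.image (map f), ?_, fun U hU => ?_⟩
  · simp only [Finset.mem_image, forall_exists_index, and_imp, forall_apply_eq_imp_iff₂]
    exact fun V hV => (hSvc V hV).of_surjective (f.subgroupMap_surjective V)
  · obtain ⟨K, hK, rfl⟩ := hlift U hU
    obtain ⟨V, hV, x, hx⟩ := hS K hK
    exact ⟨V.map f, Finset.mem_image_of_mem _ hV, f x,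
      map_conj_map_eq_map_map_conj f K x ▸ map_mono hx⟩

theorem stmt_5 {G Q : Type*} [Group G] [Group Q] (π : G →* Q)
    (hsurj : Function.Surjective π)
    (htf : ∀ q : Q, q ≠ 1 → ¬ IsOfFinOrder q)
    (hQ : ¬ HasBVC Q) : ¬ HasBVC G := by
  refine fun hG => hQ (hG.of_map π fun U hU => ?_)
  have htfU : ∀ u : U, IsOfFinOrder u → u = 1 := fun u hu =>
    Subtype.ext (Function.mtr (htf u) (U.subtype.isOfFinOrder hu))
  obtain ⟨q, rfl⟩ := U.isCyclic_iff_exists_zpowers_eq_top.mp (hU.isCyclic_of_torsionFree htfU)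
  obtain ⟨g, rfl⟩ := hsurj q
  exact ⟨zpowers g, .of_isCyclic, MonoidHom.map_zpowers π g⟩
end

section
/- In any virtually cyclic group there are only finitely many conjugacy classes of finite subgroups. -/
open Subgroup Pointwise

/-- If `a t a⁻¹ = t⁻¹`, then also `a⁻¹ t a = t⁻¹`. -/
private lemma conj_inv_of_conj_inv {V : Type*} [Group V] {a t : V}
    (h : a * t * a⁻¹ = t⁻¹) : a⁻¹ * t * a = t⁻¹ := by
  have h2 : a⁻¹ * t⁻¹ * a = t := by
    rw [← h]; group
  calc a⁻¹ * t * a = (a⁻¹ * t⁻¹ * a)⁻¹ := by group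
    _ = t⁻¹ := by rw [h2]

private lemma key_conj {V : Type*} [Group V] {h t : V}
    (hrel : h * t * h⁻¹ = t⁻¹) (m : ℤ) :
    t ^ m * h * (t ^ m)⁻¹ = h * t ^ (-2 * m) := by
  have h1 : h⁻¹ * t ^ m * h = t ^ (-m) := by
    have := conj_inv_of_conj_inv hrel
    have hc := conj_zpow (i := m) (a := h⁻¹) (b := t)
    rw [inv_inv] at hc
    calc h⁻¹ * t ^ m * h = (h⁻¹ * t * h) ^ m := hc.symm
      _ = (t⁻¹) ^ m := by rw [this]
      _ = t ^ (-m) := by rw [inv_zpow, zpow_neg]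
  have h2 : t ^ m * h = h * t ^ (-m) := by
    calc t ^ m * h = h * (h⁻¹ * t ^ m * h) := by group
      _ = h * t ^ (-m) := by rw [h1]
  rw [h2]
  rw [show (-2 : ℤ) * m = -m + -m by ring_nf, zpow_add]
  group

private lemma main_aux {V : Type*} [Group V] (t : V) (hn : (zpowers t).Normal)
    (hfi : (zpowers t).FiniteIndex) (hio : ¬ IsOfFinOrder t) :
    ∃ S : Finset (Subgroup V), ∀ H : Subgroup V, Set.Finite (H : Set V) →
      ∃ K ∈ S, ∃ g : V, H.map (MulAut.conj g).toMonoidHom = K := by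
  classical
  haveI := hn
  haveI := hfi
  -- dichotomy
  have hinjz : Function.Injective (fun n : ℤ => t ^ n) :=
    injective_zpow_iff_not_isOfFinOrder.mpr hio
  have hd : ∀ v : V, v * t * v⁻¹ = t ∨ v * t * v⁻¹ = t⁻¹ := by
    intro v
    obtain ⟨k, hk⟩ := Subgroup.mem_zpowers_iff.mp
      (hn.conj_mem t (Subgroup.mem_zpowers t) v)
    obtain ⟨j, hj⟩ := Subgroup.mem_zpowers_iff.mp
      (hn.conj_mem t (Subgroup.mem_zpowers t) v⁻¹)
    rw [inv_inv] at hj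
    have hjk : t ^ (j * k) = t ^ (1 : ℤ) := by
      have : v⁻¹ * (v * t * v⁻¹) * v = t := by group
      calc t ^ (j * k) = (t ^ j) ^ k := by rw [zpow_mul]
        _ = (v⁻¹ * t * v) ^ k := by rw [hj]
        _ = v⁻¹ * t ^ k * v := by
            have := conj_zpow (i := k) (a := v⁻¹) (b := t)
            rwa [inv_inv] at this
        _ = v⁻¹ * (v * t * v⁻¹) * v := by rw [hk]
        _ = t := this
        _ = t ^ (1 : ℤ) := (zpow_one t).symm
    have hjk' : j * k = 1 := hinjz hjk
    rcases Int.eq_one_or_neg_one_of_mul_eq_one' (mul_comm j k ▸ hjk') with ⟨hk1, _⟩ | ⟨hk1, _⟩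
    · left; rw [← hk, hk1, zpow_one]
    · right; rw [← hk, hk1]
      simp
  set T : Set V := {v | v * t * v⁻¹ = t ∧ IsOfFinOrder v} with hT
  have hTfin : T.Finite := by
    have hinj : Set.InjOn (fun v => (QuotientGroup.mk v : V ⧸ zpowers t)) T := by
      rintro u ⟨hu1, hu2⟩ w ⟨hw1, hw2⟩ huw
      obtain ⟨k, hk⟩ := Subgroup.mem_zpowers_iff.mp (QuotientGroup.eq.mp huw)
      have hw' : w = u * t ^ k := by rw [hk]; group
      have hcomm : Commute u t := by
        have : u * t = t * u := by
          calc u * t = (u * t * u⁻¹) * u := by group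
            _ = t * u := by rw [hu1]
        exact this
      have hck : Commute u (t ^ k) := hcomm.zpow_right k
      set M := orderOf u * orderOf w with hM
      have hMpos : 0 < M := Nat.mul_pos hu2.orderOf_pos hw2.orderOf_pos
      have huM : u ^ M = 1 := by
        rw [hM, pow_mul, pow_orderOf_eq_one, one_pow]
      have hwM : w ^ M = 1 := by
        rw [hM, mul_comm, pow_mul, pow_orderOf_eq_one, one_pow]
      have htkM : (t ^ k) ^ M = 1 := by
        have := hck.mul_pow M
        rw [← hw', hwM, huM, one_mul] at this
        exact this.symm
      have : t ^ (k * (M : ℤ)) = t ^ (0 : ℤ) := by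
        rw [zpow_mul, zpow_natCast, htkM, zpow_zero]
      have hk0 : k * (M : ℤ) = 0 := hinjz this
      have : k = 0 := by
        rcases mul_eq_zero.mp hk0 with h | h
        · exact h
        · exact absurd h (by exact_mod_cast hMpos.ne')
      rw [hw', this, zpow_zero, mul_one]
    exact Set.Finite.of_finite_image (Set.toFinite _) hinj
  set R : Set V := Set.range
      (fun p : (V ⧸ zpowers t) × Bool => Quotient.out p.1 * t ^ (if p.2 then (1:ℤ) else 0))
    with hR
  have hRfin : R.Finite := Set.finite_range _
  set X : Set V := T ∪ T * R with hX
  have hXfin : X.Finite := hTfin.union (hTfin.mul hRfin)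
  have hSfin : {K : Subgroup V | (K : Set V) ⊆ X}.Finite := by
    have : {K : Subgroup V | (K : Set V) ⊆ X} =
        SetLike.coe ⁻¹' {s : Set V | s ⊆ X} := rfl
    rw [this]
    exact Set.Finite.preimage (Set.injOn_of_injective SetLike.coe_injective)
      hXfin.finite_subsets
  refine ⟨hSfin.toFinset, fun H hHfin => ?_⟩
  haveI : Finite H := Set.finite_coe_iff.mpr hHfin
  have htor : ∀ x ∈ H, IsOfFinOrder x := by
    intro x hx
    have : IsOfFinOrder (⟨x, hx⟩ : H) := isOfFinOrder_of_finite _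
    exact H.subtype.isOfFinOrder this
  by_cases hrefl : ∃ h ∈ H, h * t * h⁻¹ = t⁻¹
  · obtain ⟨h, hh, hrel⟩ := hrefl
    set r : V := (QuotientGroup.mk h : V ⧸ zpowers t).out with hr
    have hrh : (QuotientGroup.mk r : V ⧸ zpowers t) = QuotientGroup.mk h :=
      QuotientGroup.out_eq' _
    obtain ⟨k, hk⟩ := Subgroup.mem_zpowers_iff.mp (QuotientGroup.eq.mp hrh)
    have hh' : h = r * t ^ k := by rw [hk]; group
    set m : ℤ := k / 2 with hm
    set e : ℤ := k % 2 with he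
    have hke : k = 2 * m + e := (Int.mul_ediv_add_emod k 2).symm
    set h₀ : V := r * t ^ e with hh₀
    have hgh : t ^ m * h * (t ^ m)⁻¹ = h₀ := by
      rw [key_conj hrel m, hh', mul_assoc, ← zpow_add]
      congr 1
      rw [hke]; ring_nf
    have h₀R : h₀ ∈ R := by
      rcases Int.emod_two_eq_zero_or_one k with h2 | h2
      · exact ⟨((QuotientGroup.mk h : V ⧸ zpowers t), false), by
          simp [hh₀, he, h2, hr]⟩
      · exact ⟨((QuotientGroup.mk h : V ⧸ zpowers t), true), by
          simp [hh₀, he, h2, hr]⟩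
    set K : Subgroup V := H.map (MulAut.conj (t ^ m)).toMonoidHom with hK
    have hKco : (K : Set V) = (fun x => t ^ m * x * (t ^ m)⁻¹) '' (H : Set V) := by
      rw [hK, Subgroup.coe_map]
      rfl
    have htorK : ∀ x ∈ K, IsOfFinOrder x := by
      intro x hx
      obtain ⟨y, hy, hxy⟩ := Subgroup.mem_map.mp hx
      exact hxy ▸ (MulAut.conj (t ^ m)).toMonoidHom.isOfFinOrder (htor y hy)
    have h₀K : h₀ ∈ K := by
      refine Subgroup.mem_map.mpr ⟨h, hh, ?_⟩
      show (MulAut.conj (t ^ m)) h = h₀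
      rw [MulAut.conj_apply]
      exact hgh
    have hgtg : (t ^ m)⁻¹ * t * t ^ m = t := by
      have h' : t * t ^ m = t ^ m * t := (Commute.self_zpow t m).eq
      rw [mul_assoc, h', ← mul_assoc, inv_mul_cancel, one_mul]
    have h₀rel : h₀ * t * h₀⁻¹ = t⁻¹ := by
      rw [← hgh]
      calc t ^ m * h * (t ^ m)⁻¹ * t * (t ^ m * h * (t ^ m)⁻¹)⁻¹
          = t ^ m * (h * ((t ^ m)⁻¹ * t * t ^ m) * h⁻¹) * (t ^ m)⁻¹ := by group
        _ = t ^ m * (h * t * h⁻¹) * (t ^ m)⁻¹ := by rw [hgtg]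
        _ = t ^ m * t⁻¹ * (t ^ m)⁻¹ := by rw [hrel]
        _ = t⁻¹ := by group
    refine ⟨K, ?_, t ^ m, rfl⟩
    rw [Set.Finite.mem_toFinset]
    intro x hx
    have hxK : x ∈ K := hx
    have hxtor : IsOfFinOrder x := htorK x hxK
    rcases hd x with hx1 | hx1
    · exact Or.inl ⟨hx1, hxtor⟩
    · right
      have hmemK : x * h₀⁻¹ ∈ K := K.mul_mem hxK (K.inv_mem h₀K)
      have hmemT : x * h₀⁻¹ ∈ T := by
        refine ⟨?_, htorK _ hmemK⟩
        have e1 : h₀⁻¹ * t * h₀ = t⁻¹ := conj_inv_of_conj_inv h₀rel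
        calc x * h₀⁻¹ * t * (x * h₀⁻¹)⁻¹
            = x * (h₀⁻¹ * t * h₀) * x⁻¹ := by group
          _ = x * t⁻¹ * x⁻¹ := by rw [e1]
          _ = (x * t * x⁻¹)⁻¹ := by group
          _ = t := by rw [hx1, inv_inv]
      have hxeq : x = x * h₀⁻¹ * h₀ := by group
      rw [hxeq]
      exact Set.mul_mem_mul hmemT h₀R
  · -- no reflections: H ⊆ T, take g = 1
    refine ⟨H, ?_, 1, ?_⟩
    · rw [Set.Finite.mem_toFinset]
      intro x hx
      left
      refine ⟨?_, htor x hx⟩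
      rcases hd x with h1 | h1
      · exact h1
      · exact absurd ⟨x, hx, h1⟩ hrefl
    · ext x
      simp [Subgroup.mem_map]

theorem stmt_6 {V : Type*} [Group V] (hV : IsVirtuallyCyclic V) :
    ∃ S : Finset (Subgroup V), ∀ H : Subgroup V, Set.Finite (H : Set V) →
      ∃ K ∈ S, ∃ g : V, H.map (MulAut.conj g).toMonoidHom = K := by
  classical
  obtain ⟨C, hCcyc, hCfi⟩ := hV
  cases finite_or_infinite V with
  | inl hfin =>
    haveI := Fintype.ofFinite (Subgroup V)
    refine ⟨Finset.univ, fun H _ => ⟨H, Finset.mem_univ _, 1, ?_⟩⟩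
    ext x
    simp [Subgroup.mem_map]
  | inr hinf =>
    haveI := hCfi
    haveI := hCcyc
    set N : Subgroup V := C.normalCore with hN
    haveI : N.FiniteIndex := Subgroup.finiteIndex_normalCore C
    haveI : IsCyclic N := Subgroup.isCyclic_of_le C.normalCore_le
    obtain ⟨g, hg⟩ := IsCyclic.exists_generator (α := N)
    have hNz : N = zpowers (g : V) := by
      apply le_antisymm
      · intro x hx
        obtain ⟨k, hk⟩ := Subgroup.mem_zpowers_iff.mp (hg ⟨x, hx⟩)
        refine Subgroup.mem_zpowers_iff.mpr ⟨k, ?_⟩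
        have := congrArg (Subtype.val) hk
        simpa using this
      · exact Subgroup.zpowers_le.mpr g.2
    have hnorm : (zpowers (g : V)).Normal := hNz ▸ C.normalCore_normal
    have hfi2 : (zpowers (g : V)).FiniteIndex := hNz ▸ ‹N.FiniteIndex›
    have hio : ¬ IsOfFinOrder (g : V) := by
      intro hfo
      have hfinz : (zpowers (g : V) : Set V).Finite := by
        rw [← Set.finite_coe_iff] at *
        exact Set.Finite.ofFinset hfo.finite_zpowers.toFinset (by simp)
      haveI : Finite (zpowers (g : V)) := hfinz.to_subtype
      haveI : Finite (V ⧸ zpowers (g : V)) :=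
        @Subgroup.finite_quotient_of_finiteIndex _ _ _ hfi2
      haveI : Finite V :=
        Finite.of_equiv _ (Subgroup.groupEquivQuotientProdSubgroup
          (s := zpowers (g : V))).symm
      exact not_finite V
    exact main_aux (g : V) hnorm hfi2 hio
end

section
/- If a group G has BVC, then G has finitely many conjugacy classes of finite subgroups; in particular, the orders of finite subgroups of G are bounded. -/
/-!
Every finite subgroup of a group with BVC is conjugate into one of finitely many virtually cyclic
subgroups, so it suffices to find, in a virtually cyclic group `V`, a finite set `X` such that every
finite subgroup is conjugate to one contained in `X`. Subgroups contained in `X` are finitely many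
and have order at most `|X|`.

If `V` is infinite, it has a normal infinite cyclic subgroup `⟨t⟩` of finite index, and every
element either centralises or inverts `t`. The torsion elements centralising `t` form a finite set
`F`: two of them in the same coset of `⟨t⟩` differ by a power of `t` commuting with both, which
must be trivial. A finite subgroup `K` centralising `t` lies in `F`. Otherwise `K` contains an
element `s` inverting `t`, and `K ⊆ F ∪ sF`; conjugating by a power of `t` moves `s` into the
finite set `R * {1, t}`, where `R` is a set of coset representatives of `⟨t⟩`, and fixes `F`.
-/

open Subgroup
open scoped Pointwise

def FiniteSubgroupsConjIntoFiniteSet (G : Type*) [Group G] : Prop :=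
  ∃ X : Set G, X.Finite ∧ ∀ H : Subgroup G, (H : Set G).Finite →
    ∃ g : G, (H.map (MulAut.conj g).toMonoidHom : Set G) ⊆ X

lemma Subgroup.isOfFinOrder_of_mem_of_finite {G : Type*} [Group G] {K : Subgroup G}
    (hK : (K : Set G).Finite) {x : G} (hx : x ∈ K) : IsOfFinOrder x :=
  haveI := hK.to_subtype
  Submonoid.isOfFinOrder_coe.2 (isOfFinOrder_of_finite (⟨x, hx⟩ : K))

section NormalInfiniteCyclic

variable {V : Type*} [Group V] {t : V}

lemma commute_or_conj_eq_inv_of_normal_zpowers (ht : ¬IsOfFinOrder t) [(zpowers t).Normal]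
    (v : V) : Commute v t ∨ v * t * v⁻¹ = t⁻¹ := by
  obtain ⟨k, hk⟩ := mem_zpowers_iff.1 (Normal.conj_mem ‹_› t (mem_zpowers t) v)
  obtain ⟨j, hj⟩ := mem_zpowers_iff.1 (Normal.conj_mem ‹_› t (mem_zpowers t) v⁻¹)
  have hkj : t ^ (k * j) = t ^ (1 : ℤ) := by
    rw [zpow_mul, hk, conj_zpow, hj]
    group
  rcases Int.eq_one_or_neg_one_of_mul_eq_one (injective_zpow_iff_not_isOfFinOrder.2 ht hkj)
    with rfl | rfl
  · left
    rw [zpow_one] at hk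
    exact mul_inv_eq_iff_eq_mul.1 hk.symm
  · right
    rw [← hk, zpow_neg_one]

lemma commute_inv_mul_of_conj_eq_inv {a b : V} (ha : a * t * a⁻¹ = t⁻¹)
    (hb : b * t * b⁻¹ = t⁻¹) : Commute (a⁻¹ * b) t :=
  calc a⁻¹ * b * t = a⁻¹ * (b * t * b⁻¹) * b := by group
    _ = a⁻¹ * (a * t * a⁻¹) * b := by rw [hb, ha]
    _ = t * (a⁻¹ * b) := by group

lemma finite_setOf_commute_isOfFinOrder (ht : ¬IsOfFinOrder t) [(zpowers t).FiniteIndex] :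
    {x : V | Commute x t ∧ IsOfFinOrder x}.Finite := by
  refine Set.Finite.of_finite_image (f := (QuotientGroup.mk : V → V ⧸ zpowers t))
    (Set.toFinite _) ?_
  rintro x ⟨hxt, hx⟩ y ⟨-, hy⟩ hxy
  obtain ⟨a, ha⟩ := mem_zpowers_iff.1 (QuotientGroup.eq.1 hxy)
  have hya : y = x * t ^ a := by rw [ha, mul_inv_cancel_left]
  set n := orderOf x * orderOf y
  have hn : n ≠ 0 := (Nat.mul_pos hx.orderOf_pos hy.orderOf_pos).ne'
  have hxn : x ^ n = 1 := orderOf_dvd_iff_pow_eq_one.1 (dvd_mul_right _ _)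
  have hyn : y ^ n = 1 := orderOf_dvd_iff_pow_eq_one.1 (dvd_mul_left _ _)
  have htn : t ^ (a * n) = t ^ (0 : ℤ) := by
    rw [hya, (hxt.zpow_right a).mul_pow, hxn, one_mul, ← zpow_natCast, ← zpow_mul] at hyn
    rw [hyn, zpow_zero]
  have ha0 : a = 0 := by
    simpa [hn] using injective_zpow_iff_not_isOfFinOrder.2 ht htn
  rw [hya, ha0, zpow_zero, mul_one]

lemma exists_conj_zpow_mem_range_out_mul (s : V) (hs : s * t * s⁻¹ = t⁻¹) :
    ∃ c : ℤ, t ^ c * s * (t ^ c)⁻¹ ∈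
      Set.range (fun q : V ⧸ zpowers t => q.out) * {1, t} := by
  obtain ⟨⟨u, hu⟩, hout⟩ := QuotientGroup.mk_out_eq_mul (zpowers t) s
  obtain ⟨b, rfl⟩ := mem_zpowers_iff.1 hu
  -- since `s` inverts `t`, conjugating by `t ^ c` shifts the `t`-exponent of `s` by `-2 * c`
  obtain ⟨c, e, he, hbce⟩ : ∃ c e : ℤ, (e = 0 ∨ e = 1) ∧ -b = 2 * c + e :=
    ⟨-b / 2, -b % 2, Int.emod_two_eq_zero_or_one _, by omega⟩
  have hsc : s * (t ^ c)⁻¹ * s⁻¹ = t ^ c := by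
    rw [← zpow_neg, ← conj_zpow, hs, inv_zpow', neg_neg]
  refine ⟨c, Set.mem_mul.2 ⟨_, ⟨QuotientGroup.mk s, rfl⟩, t ^ e, ?_, ?_⟩⟩
  · rcases he with rfl | rfl <;> simp
  calc (QuotientGroup.mk s : V ⧸ zpowers t).out * t ^ e
      = s * t ^ (b + e) := by rw [hout, zpow_add]; group
    _ = s * (t ^ c)⁻¹ * (t ^ c)⁻¹ := by
        rw [← zpow_neg, mul_assoc, ← zpow_add]
        congr 2
        omega
    _ = (s * (t ^ c)⁻¹ * s⁻¹) * s * (t ^ c)⁻¹ := by group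
    _ = t ^ c * s * (t ^ c)⁻¹ := by rw [hsc]

theorem finiteSubgroupsConjIntoFiniteSet_of_zpowers (ht : ¬IsOfFinOrder t)
    [(zpowers t).Normal] [(zpowers t).FiniteIndex] : FiniteSubgroupsConjIntoFiniteSet V := by
  set F := {x : V | Commute x t ∧ IsOfFinOrder x}
  set R := Set.range (fun q : V ⧸ zpowers t => q.out)
  have hF : F.Finite := finite_setOf_commute_isOfFinOrder ht
  refine ⟨F ∪ R * {1, t} * F,
    hF.union (((Set.finite_range _).mul (Set.toFinite _)).mul hF), fun K hK => ?_⟩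
  have htors {x : V} (hx : x ∈ K) : IsOfFinOrder x := isOfFinOrder_of_mem_of_finite hK hx
  by_cases hKt : ∀ x ∈ K, Commute x t
  · refine ⟨1, ?_⟩
    rintro _ ⟨x, hx, rfl⟩
    exact Or.inl ⟨by simpa using hKt x hx, by simpa using htors hx⟩
  simp only [not_forall] at hKt
  obtain ⟨s, hsK, hst⟩ := hKt
  have hs := (commute_or_conj_eq_inv_of_normal_zpowers ht s).resolve_left hst
  obtain ⟨c, hc⟩ := exists_conj_zpow_mem_range_out_mul s hs
  refine ⟨t ^ c, ?_⟩
  rintro _ ⟨x, hx, rfl⟩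
  simp only [MulEquiv.coe_toMonoidHom, MulAut.conj_apply]
  rcases commute_or_conj_eq_inv_of_normal_zpowers ht x with hxt | hxt
  · left
    rw [← (hxt.zpow_right c).eq, mul_inv_cancel_right]
    exact ⟨hxt, htors hx⟩
  · right
    have hsx := commute_inv_mul_of_conj_eq_inv hs hxt
    refine ⟨_, hc, s⁻¹ * x, ⟨hsx, htors (K.mul_mem (K.inv_mem hsK) hx)⟩, ?_⟩
    calc t ^ c * s * (t ^ c)⁻¹ * (s⁻¹ * x) = t ^ c * s * ((t ^ c)⁻¹ * (s⁻¹ * x)) := by group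
      _ = t ^ c * s * ((s⁻¹ * x) * (t ^ c)⁻¹) := by rw [((hsx.zpow_right c).inv_right).eq]
      _ = t ^ c * x * (t ^ c)⁻¹ := by group

end NormalInfiniteCyclic

theorem IsVirtuallyCyclic.finiteSubgroupsConjIntoFiniteSet {V : Type*} [Group V]
    (hV : IsVirtuallyCyclic V) : FiniteSubgroupsConjIntoFiniteSet V := by
  cases finite_or_infinite V
  · exact ⟨Set.univ, Set.finite_univ, fun _ _ => ⟨1, Set.subset_univ _⟩⟩
  obtain ⟨H, hHcyc, hHfi⟩ := hV
  obtain ⟨t, ht⟩ := (H.normalCore.isCyclic_iff_exists_zpowers_eq_top).1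
    (isCyclic_of_le H.normalCore_le)
  have : (zpowers t).Normal := by rw [ht]; infer_instance
  have : (zpowers t).FiniteIndex := by rw [ht]; infer_instance
  refine finiteSubgroupsConjIntoFiniteSet_of_zpowers (t := t) fun htfin => ?_
  have : Finite (zpowers t) := htfin.finite_zpowers
  have : Finite V := (finite_iff_finite_and_finiteIndex (zpowers t)).2 ⟨this, inferInstance⟩
  exact not_finite V

lemma exists_conj_subset_image_of_map_conj_le {G : Type*} [Group G] {W : Subgroup G}
    {X : Set W} (hX : ∀ K : Subgroup W, (K : Set W).Finite →
      ∃ w : W, (K.map (MulAut.conj w).toMonoidHom : Set W) ⊆ X)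
    {H : Subgroup G} (hH : (H : Set G).Finite) {g : G}
    (hg : H.map (MulAut.conj g).toMonoidHom ≤ W) :
    ∃ g' : G, (H.map (MulAut.conj g').toMonoidHom : Set G) ⊆ Subtype.val '' X := by
  set K := (H.map (MulAut.conj g).toMonoidHom).subgroupOf W
  have hK : (K : Set W).Finite := ((hH.image _).preimage Subtype.val_injective.injOn).subset fun _ hx => hx
  obtain ⟨w, hw⟩ := hX K hK
  refine ⟨w * g, ?_⟩
  rintro _ ⟨x, hx, rfl⟩
  have hgx : g * x * g⁻¹ ∈ W := hg ⟨x, hx, rfl⟩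
  refine ⟨w * ⟨_, hgx⟩ * w⁻¹, hw ⟨⟨_, hgx⟩, ⟨x, hx, rfl⟩, rfl⟩, ?_⟩
  simp only [MulEquiv.coe_toMonoidHom, MulAut.conj_apply, coe_mul, coe_inv]
  group

theorem HasBVC.finiteSubgroupsConjIntoFiniteSet {G : Type*} [Group G] (hG : HasBVC G) :
    FiniteSubgroupsConjIntoFiniteSet G := by
  obtain ⟨S, hSvc, hSconj⟩ := hG
  choose X hXfin hX using fun W : S => (hSvc W W.2).finiteSubgroupsConjIntoFiniteSet
  refine ⟨⋃ W : S, Subtype.val '' X W, Set.finite_iUnion fun W => (hXfin W).image _,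
    fun H hH => ?_⟩
  have := hH.to_subtype
  obtain ⟨W, hW, g, hg⟩ := hSconj H ⟨⊥, isCyclic_of_subsingleton, inferInstance⟩
  obtain ⟨g', hg'⟩ := exists_conj_subset_image_of_map_conj_le (hX ⟨W, hW⟩) hH hg
  exact ⟨g', hg'.trans (Set.subset_iUnion_of_subset ⟨W, hW⟩ subset_rfl)⟩

namespace FiniteSubgroupsConjIntoFiniteSet

variable {G : Type*} [Group G]

theorem exists_finset_map_conj_eq (h : FiniteSubgroupsConjIntoFiniteSet G) :
    ∃ S : Finset (Subgroup G), ∀ H : Subgroup G, (H : Set G).Finite →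
      ∃ K ∈ S, ∃ g : G, H.map (MulAut.conj g).toMonoidHom = K := by
  obtain ⟨X, hX, hconj⟩ := h
  have hfin : {K : Subgroup G | (K : Set G) ⊆ X}.Finite :=
    (hX.finite_subsets.subset (Set.image_subset_iff.2 fun _ hK => hK)).of_finite_image
      SetLike.coe_injective.injOn
  refine ⟨hfin.toFinset, fun H hH => ?_⟩
  obtain ⟨g, hg⟩ := hconj H hH
  exact ⟨_, hfin.mem_toFinset.2 hg, g, rfl⟩

theorem exists_card_le (h : FiniteSubgroupsConjIntoFiniteSet G) :
    ∃ N : ℕ, ∀ H : Subgroup G, (H : Set G).Finite → Nat.card H ≤ N := by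
  obtain ⟨X, hX, hconj⟩ := h
  refine ⟨X.ncard, fun H hH => ?_⟩
  obtain ⟨g, hg⟩ := hconj H hH
  calc Nat.card H = Nat.card (H.map (MulAut.conj g).toMonoidHom) :=
        (card_map_of_injective (MulAut.conj g).injective).symm
    _ = (H.map (MulAut.conj g).toMonoidHom : Set G).ncard := Nat.card_coe_set_eq _
    _ ≤ X.ncard := Set.ncard_le_ncard hg hX

end FiniteSubgroupsConjIntoFiniteSet

theorem stmt_7 {G : Type*} [Group G] (hG : HasBVC G) :
    (∃ S : Finset (Subgroup G), ∀ H : Subgroup G, Set.Finite (H : Set G) →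
      ∃ K ∈ S, ∃ g : G, H.map (MulAut.conj g).toMonoidHom = K) ∧
    ∃ N : ℕ, ∀ H : Subgroup G, Set.Finite (H : Set G) → Nat.card H ≤ N :=
  ⟨hG.finiteSubgroupsConjIntoFiniteSet.exists_finset_map_conj_eq,
    hG.finiteSubgroupsConjIntoFiniteSet.exists_card_le⟩
end

section
/- If a group G has BVC, then the abelianization H₁(G, ℤ) = G/[G,G] is finitely generated of rank at most one. -/
/-!
Conjugating a cyclic subgroup into one of the finitely many virtually cyclic subgroups `V`
of the BVC family does not change its image in the abelianization `A`, so `A` is the union of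
the finitely many images of the `V`, which are virtually cyclic. Hence `A` is finitely
generated, and every element of `A` has a positive power in one of finitely many cyclic
subgroups `⟨c_V⟩`. For any `x, y`, two of the elements `x * y ^ j` (`j ∈ ℕ`) share the same
`c_V`, which yields a nontrivial relation `x ^ a = y ^ b`. So the free abelian group
`A / torsion` has no two independent elements, i.e. it is cyclic.
-/

open Subgroup

theorem Group.fg_of_fg_of_finiteIndex {K : Type*} [Group K] (H : Subgroup K) [H.FiniteIndex]
    (hH : H.FG) : Group.FG K := by
  obtain ⟨s, hs⟩ := hH
  have : Finite (K ⧸ H) := finite_quotient_of_finiteIndex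
  let R := Set.range (Quotient.out : K ⧸ H → K)
  refine Group.fg_iff.mpr ⟨s ∪ R, eq_top_iff.mpr fun g _ => ?_,
    s.finite_toSet.union (Set.finite_range _)⟩
  obtain ⟨h, hh⟩ := QuotientGroup.mk_out_eq_mul H g
  have hH : H ≤ closure (↑s ∪ R) := hs ▸ closure_mono Set.subset_union_left
  rw [show g = (g : K ⧸ H).out * (h : K)⁻¹ by rw [hh, mul_inv_cancel_right]]
  exact mul_mem (subset_closure (Or.inr ⟨_, rfl⟩)) (hH (inv_mem h.2))

theorem IsCyclic.fg (K : Type*) [Group K] [IsCyclic K] : Group.FG K := by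
  obtain ⟨c, hc⟩ := isCyclic_iff_exists_zpowers_eq_top.mp ‹IsCyclic K›
  exact Group.fg_iff.mpr ⟨{c}, by rw [← zpowers_eq_closure, hc], Set.finite_singleton c⟩

theorem Group.fg_of_finite_cover {K : Type*} [Group K] (S : Finset (Subgroup K))
    (hS : ∀ H ∈ S, H.FG) (hcover : ∀ x, ∃ H ∈ S, x ∈ H) : Group.FG K := by
  have htop : ⨆ H ∈ S, id H = ⊤ := eq_top_iff.mpr fun x _ =>
    let ⟨H, hH, hx⟩ := hcover x
    le_biSup id hH hx
  exact Group.fg_def.mpr (htop ▸ FG.biSup_finset S id hS)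

namespace IsVirtuallyCyclic

variable {K : Type*} [Group K]

theorem of_isCyclic_s11 [IsCyclic K] : IsVirtuallyCyclic K :=
  ⟨⊤, inferInstance, inferInstance⟩

theorem fg (hK : IsVirtuallyCyclic K) : Group.FG K := by
  obtain ⟨H, _, _⟩ := hK
  exact Group.fg_of_fg_of_finiteIndex H ((Group.fg_iff_subgroup_fg H).mp (IsCyclic.fg H))

theorem of_surjective_s11 {K' : Type*} [Group K'] (hK : IsVirtuallyCyclic K) (f : K →* K')
    (hf : Function.Surjective f) : IsVirtuallyCyclic K' := by
  obtain ⟨H, _, hH⟩ := hK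
  exact ⟨H.map f, isCyclic_of_surjective _ (f.subgroupMap_surjective H),
    ⟨fun h0 => hH.1 (Nat.eq_zero_of_zero_dvd (h0 ▸ H.index_map_dvd hf))⟩⟩

theorem exists_zpow_mem_zpowers {H : Subgroup K} (hH : IsVirtuallyCyclic H) :
    ∃ c : K, ∀ x ∈ H, ∃ n : ℤ, 0 < n ∧ x ^ n ∈ zpowers c := by
  obtain ⟨L, hL, hLi⟩ := hH
  obtain ⟨c, rfl⟩ := (L.isCyclic_iff_exists_zpowers_eq_top).mp hL
  refine ⟨c, fun x hx => ?_⟩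
  obtain ⟨n, hn, -, hxn⟩ := exists_pow_mem_of_index_ne_zero hLi.1 ⟨x, hx⟩
  refine ⟨n, by exact_mod_cast hn, ?_⟩
  have := mem_map_of_mem H.subtype hxn
  rw [MonoidHom.map_zpowers, map_pow] at this
  exact_mod_cast this

end IsVirtuallyCyclic

theorem HasBVC.exists_virtuallyCyclic_cover_abelianization {G : Type*} [Group G]
    (hG : HasBVC G) : ∃ S : Finset (Subgroup (Abelianization G)),
      (∀ H ∈ S, IsVirtuallyCyclic H) ∧ ∀ x, ∃ H ∈ S, x ∈ H := by
  classical
  obtain ⟨S, hS, hconj⟩ := hG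
  refine ⟨S.image (map Abelianization.of), ?_, fun x => ?_⟩
  · simp only [Finset.mem_image, forall_exists_index, and_imp, forall_apply_eq_imp_iff₂]
    exact fun V hV => (hS V hV).of_surjective_s11 _ (Abelianization.of.subgroupMap_surjective V)
  · obtain ⟨x, rfl⟩ := Quot.exists_rep x
    obtain ⟨V, hV, g, hle⟩ := hconj (zpowers x) IsVirtuallyCyclic.of_isCyclic_s11
    refine ⟨V.map Abelianization.of, Finset.mem_image_of_mem _ hV,
      g * x * g⁻¹, hle ⟨x, mem_zpowers x, rfl⟩, ?_⟩
    rw [map_mul, map_mul, map_inv, mul_inv_cancel_comm, Abelianization.mk_eq_of]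

theorem exists_zpow_eq_zpow_of_zpow_mem_zpowers {K : Type*} [Group K] {c u v : K}
    (hu : ∃ n : ℤ, 0 < n ∧ u ^ n ∈ zpowers c) (hv : ∃ m : ℤ, 0 < m ∧ v ^ m ∈ zpowers c) :
    ∃ a b : ℤ, (a ≠ 0 ∨ b ≠ 0) ∧ u ^ a = v ^ b := by
  obtain ⟨n, hn, k, hk : c ^ k = u ^ n⟩ := hu
  obtain ⟨m, hm, l, hl : c ^ l = v ^ m⟩ := hv
  by_cases hl0 : l = 0
  · exact ⟨0, m, Or.inr hm.ne', by rw [zpow_zero, ← hl, hl0, zpow_zero]⟩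
  · refine ⟨n * l, m * k, Or.inl (mul_ne_zero hn.ne' hl0), ?_⟩
    rw [zpow_mul, zpow_mul, ← hk, ← hl, ← zpow_mul, ← zpow_mul, mul_comm]

theorem exists_zpow_eq_zpow_of_mul_zpow {A : Type*} [CommGroup A] {x y : A} {a b j j' : ℤ}
    (hjj' : j ≠ j') (hab : a ≠ 0 ∨ b ≠ 0) (h : (x * y ^ j) ^ a = (x * y ^ j') ^ b) :
    ∃ a b : ℤ, (a ≠ 0 ∨ b ≠ 0) ∧ x ^ a = y ^ b := by
  refine ⟨a - b, j' * b - j * a, ?_, ?_⟩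
  · by_contra! h0
    have : (j' - j) * a = 0 := by linear_combination h0.2 + j' * h0.1
    rcases mul_eq_zero.mp this with h1 | h1 <;> omega
  · rw [mul_zpow, mul_zpow, ← zpow_mul, ← zpow_mul] at h
    rw [zpow_sub, zpow_sub, ← div_eq_mul_inv, ← div_eq_mul_inv, div_eq_div_iff_mul_eq_mul, h,
      mul_comm]

theorem exists_zpow_eq_zpow_of_finite_cover {A : Type*} [CommGroup A] (S : Finset (Subgroup A))
    (hS : ∀ H ∈ S, IsVirtuallyCyclic H) (hcover : ∀ x, ∃ H ∈ S, x ∈ H) (x y : A) :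
    ∃ a b : ℤ, (a ≠ 0 ∨ b ≠ 0) ∧ x ^ a = y ^ b := by
  choose H hHS hH using fun j : ℕ => hcover (x * y ^ (j : ℤ))
  obtain ⟨j, j', hjj', hHj⟩ :=
    Finite.exists_ne_map_eq_of_infinite fun j : ℕ => (⟨H j, hHS j⟩ : S)
  have hHj : H j = H j' := congrArg Subtype.val hHj
  obtain ⟨c, hc⟩ := (hS _ (hHS j)).exists_zpow_mem_zpowers
  obtain ⟨a, b, hab, h⟩ := exists_zpow_eq_zpow_of_zpow_mem_zpowers (hc _ (hH j))
    (hc _ (hHj ▸ hH j'))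
  exact exists_zpow_eq_zpow_of_mul_zpow (by exact_mod_cast hjj') hab h

theorem isAddCyclic_of_forall_exists_zsmul_eq_zsmul {M : Type*} [AddCommGroup M]
    [Module.Finite ℤ M] [IsAddTorsionFree M]
    (hdep : ∀ x y : M, ∃ a b : ℤ, (a ≠ 0 ∨ b ≠ 0) ∧ a • x = b • y) : IsAddCyclic M := by
  let b := Module.Free.chooseBasis ℤ M
  have : Subsingleton (Module.Free.ChooseBasisIndex ℤ M) := by
    refine ⟨fun i j => by_contra fun hij => ?_⟩
    obtain ⟨m, n, hmn, h⟩ := hdep (b i) (b j)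
    have := (LinearIndepOn.pair_iff b hij).mp (b.linearIndependent.linearIndepOn _) m (-n)
      (by rw [neg_smul, h, add_neg_cancel])
    omega
  obtain ⟨g, hg⟩ : ∃ g, Set.range b ⊆ {g} := by
    rcases (Set.subsingleton_range b).eq_empty_or_singleton with h | ⟨g, h⟩
    · exact ⟨0, h ▸ Set.empty_subset _⟩
    · exact ⟨g, h.le⟩
  refine ⟨g, fun x => ?_⟩
  have hx : x ∈ Submodule.span ℤ {g} := Submodule.span_mono hg (b.span_eq ▸ Submodule.mem_top)
  obtain ⟨k, hk⟩ := Submodule.mem_span_singleton.mp hx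
  exact AddSubgroup.mem_zmultiples_iff.mpr ⟨k, hk⟩

theorem CommGroup.isCyclic_quotient_torsion {A : Type*} [CommGroup A] [Group.FG A]
    (hdep : ∀ x y : A, ∃ a b : ℤ, (a ≠ 0 ∨ b ≠ 0) ∧ x ^ a = y ^ b) :
    IsCyclic (A ⧸ CommGroup.torsion A) := by
  have : Module.Finite ℤ (Additive (A ⧸ CommGroup.torsion A)) :=
    Module.Finite.iff_addGroup_fg.mpr inferInstance
  have hdepQ : ∀ x y : A ⧸ CommGroup.torsion A, ∃ a b : ℤ, (a ≠ 0 ∨ b ≠ 0) ∧ x ^ a = y ^ b := by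
    intro x y
    obtain ⟨x, rfl⟩ := QuotientGroup.mk_surjective x
    obtain ⟨y, rfl⟩ := QuotientGroup.mk_surjective y
    obtain ⟨a, b, hab, h⟩ := hdep x y
    exact ⟨a, b, hab, by rw [← QuotientGroup.mk_zpow, h, QuotientGroup.mk_zpow]⟩
  refine isAddCyclic_additive_iff.mp (isAddCyclic_of_forall_exists_zsmul_eq_zsmul fun x y => ?_)
  obtain ⟨a, b, hab, h⟩ := hdepQ x.toMul y.toMul
  exact ⟨a, b, hab, congrArg Additive.ofMul h⟩

/-- The abelianization is finitely generated of rank at most one: it is finitely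
generated and becomes cyclic after quotienting out torsion, i.e. there is an element
`g` such that every element agrees with a power of `g` up to a torsion element. -/
theorem stmt_11 {G : Type*} [Group G] (hG : HasBVC G) :
    Group.FG (Abelianization G) ∧
      ∃ g : Abelianization G, ∀ x : Abelianization G,
        ∃ k : ℤ, IsOfFinOrder (x * (g ^ k)⁻¹) := by
  obtain ⟨S, hS, hcover⟩ := hG.exists_virtuallyCyclic_cover_abelianization
  have hfg : Group.FG (Abelianization G) := Group.fg_of_finite_cover S
    (fun H hH => (Group.fg_iff_subgroup_fg H).mp (hS H hH).fg) hcover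
  refine ⟨hfg, ?_⟩
  obtain ⟨g, hg⟩ := (CommGroup.isCyclic_quotient_torsion
    (exists_zpow_eq_zpow_of_finite_cover S hS hcover)).exists_generator
  obtain ⟨g, rfl⟩ := QuotientGroup.mk_surjective g
  refine ⟨g, fun x => ?_⟩
  obtain ⟨k, hk⟩ := mem_zpowers_iff.mp (hg x)
  refine ⟨k, (CommGroup.mem_torsion _).mp ((QuotientGroup.eq_one_iff _).mp ?_)⟩
  rw [QuotientGroup.mk_mul, QuotientGroup.mk_inv, QuotientGroup.mk_zpow, hk, mul_inv_cancel]
end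

section
/- Let x > 0 and y ≥ 0 be rational numbers and set λₙ = √(x + (y+n)²) for n ∈ ℕ. Then the set A = {λₙ : n ∈ ℕ} is not finitely divisor dominated, i.e., there do not exist finitely many real numbers x₁, ..., xₘ such that A ⊆ ⋃ᵢ ℤ·xᵢ. -/
/-- A set of reals is finitely divisor dominated if it is contained in a finite
union of sets of the form `ℤ · x`. -/
def FinDivDominated (A : Set ℝ) : Prop :=
  ∃ s : Finset ℝ, ∀ a ∈ A, ∃ x ∈ s, ∃ k : ℤ, a = k * x


private lemma factor_aux (A B p q : ℕ) (hp : 0 < p) (hq : 0 < q) (hA : 0 < A)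
    (h : A * q ^ 2 = B * p ^ 2) :
    ∃ β κ κ' : ℕ, 0 < β ∧ 0 < κ ∧ 0 < κ' ∧ A = β * κ ^ 2 ∧ B = β * κ' ^ 2 := by
  have hB : 0 < B := by
    rcases Nat.eq_zero_or_pos B with hB0 | hB0
    · exfalso
      have h1 : 0 < A * q ^ 2 := by positivity
      rw [h, hB0] at h1; simp at h1
    · exact hB0
  set e := Nat.gcd p q with he
  have hepos : 0 < e := Nat.gcd_pos_of_pos_left _ hp
  obtain ⟨p₀, hp₀⟩ : e ∣ p := Nat.gcd_dvd_left p q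
  obtain ⟨q₀, hq₀⟩ : e ∣ q := Nat.gcd_dvd_right p q
  have hp₀pos : 0 < p₀ := by
    rcases Nat.eq_zero_or_pos p₀ with h0 | h0
    · exfalso; rw [h0, Nat.mul_zero] at hp₀; omega
    · exact h0
  have hq₀pos : 0 < q₀ := by
    rcases Nat.eq_zero_or_pos q₀ with h0 | h0
    · exfalso; rw [h0, Nat.mul_zero] at hq₀; omega
    · exact h0
  have hcop : Nat.Coprime p₀ q₀ := by
    have hco := Nat.coprime_div_gcd_div_gcd (m := p) (n := q) (he ▸ hepos)
    have hp' : p / e = p₀ := by rw [hp₀]; exact Nat.mul_div_cancel_left _ hepos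
    have hq' : q / e = q₀ := by rw [hq₀]; exact Nat.mul_div_cancel_left _ hepos
    rwa [← he, hp', hq'] at hco
  have h' : A * q₀ ^ 2 = B * p₀ ^ 2 := by
    have h2 : (A * q₀ ^ 2) * e ^ 2 = (B * p₀ ^ 2) * e ^ 2 := by
      calc (A * q₀ ^ 2) * e ^ 2 = A * (e * q₀) ^ 2 := by ring
        _ = A * q ^ 2 := by rw [← hq₀]
        _ = B * p ^ 2 := h
        _ = B * (e * p₀) ^ 2 := by rw [← hp₀]
        _ = (B * p₀ ^ 2) * e ^ 2 := by ring
    exact Nat.eq_of_mul_eq_mul_right (by positivity) h2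
  have hdvd : q₀ ^ 2 ∣ B := by
    have hd1 : q₀ ^ 2 ∣ B * p₀ ^ 2 := ⟨A, by rw [← h']; ring⟩
    exact (Nat.Coprime.pow _ _ hcop.symm).dvd_of_dvd_mul_right hd1
  obtain ⟨β, hβ⟩ := hdvd
  have hβpos : 0 < β := by
    rcases Nat.eq_zero_or_pos β with h0 | h0
    · exfalso; rw [h0, Nat.mul_zero] at hβ; omega
    · exact h0
  have hAeq : A = β * p₀ ^ 2 := by
    have h3 : A * q₀ ^ 2 = (β * p₀ ^ 2) * q₀ ^ 2 := by rw [h', hβ]; ring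
    exact Nat.eq_of_mul_eq_mul_right (by positivity) h3
  exact ⟨β, p₀, q₀, hβpos, hp₀pos, hq₀pos, hAeq, by rw [hβ]; ring⟩

private lemma key_ineq (a β P Q U V : ℤ) (ha : 1 ≤ a) (hU : 1 ≤ U) (hUV : U < V)
    (hβ : 1 ≤ β) (hP : 1 ≤ P) (hQ : 1 ≤ Q)
    (h1 : U ^ 2 + a = β * P ^ 2) (h2 : V ^ 2 + a = β * Q ^ 2) :
    U ≤ 2 * a * (V - U) := by
  have hVpos : (0:ℤ) < V := by linarith
  have hPQsq : P ^ 2 < Q ^ 2 := by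
    nlinarith [mul_pos (show (0:ℤ) < V - U by linarith) (show (0:ℤ) < V + U by linarith)]
  have hQP : P < Q := by nlinarith [mul_pos (show (0:ℤ) < P by linarith) (show (0:ℤ) < Q by linarith)]
  have h7 : 1 ≤ Q ^ 2 - P ^ 2 := by linarith
  have key : (V * P - U * Q) * (U * Q + V * P) = a * (Q ^ 2 - P ^ 2) := by
    linear_combination P ^ 2 * h2 - Q ^ 2 * h1
  have hS : 0 < U * Q + V * P := by
    have := mul_pos (show (0:ℤ) < U by linarith) (show (0:ℤ) < Q by linarith)
    have := mul_pos hVpos (show (0:ℤ) < P by linarith)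
    linarith
  have hRHS : 0 < a * (Q ^ 2 - P ^ 2) := by nlinarith
  have hD1 : 1 ≤ V * P - U * Q := by
    rcases le_or_gt (V * P - U * Q) 0 with hD | hD
    · exfalso
      nlinarith [mul_nonneg (neg_nonneg.mpr hD) hS.le]
    · exact hD
  have h3 : U * Q + V * P ≤ a * (Q ^ 2 - P ^ 2) := by
    nlinarith [mul_le_mul_of_nonneg_right hD1 hS.le]
  have hb1 : β * (U ^ 2 + a) = (β * P) ^ 2 := by rw [h1]; ring
  have hUa : (0:ℤ) ≤ U ^ 2 + a := by positivity
  have hbig : U ^ 2 + a ≤ (β * P) ^ 2 := by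
    nlinarith [hb1, mul_nonneg (sub_nonneg.mpr hβ) hUa]
  have hβPpos : (0:ℤ) < β * P := mul_pos (by linarith) (by linarith)
  have hUsq : U ^ 2 < (β * P) ^ 2 := by nlinarith
  have h4 : U ≤ β * P := (lt_of_pow_lt_pow_left₀ 2 hβPpos.le hUsq).le
  have e1 : V ^ 2 - U ^ 2 = β * (Q ^ 2 - P ^ 2) := by linear_combination h2 - h1
  have e2 : β * (U * Q + V * P) ≤ β * (a * (Q ^ 2 - P ^ 2)) :=
    mul_le_mul_of_nonneg_left h3 (by linarith)
  have e3 : U * V ≤ β * P * V := mul_le_mul_of_nonneg_right h4 (by linarith)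
  have e4 : a * (V ^ 2 - U ^ 2) = a * (β * (Q ^ 2 - P ^ 2)) := by rw [e1]
  have h5 : U * V ≤ a * (V ^ 2 - U ^ 2) := by
    nlinarith [e2, e3, e4, mul_nonneg (mul_nonneg (show (0:ℤ) ≤ β by linarith)
      (show (0:ℤ) ≤ U by linarith)) (show (0:ℤ) ≤ Q by linarith)]
  have h6 : U * V ≤ (2 * a * (V - U)) * V := by
    nlinarith [h5, mul_nonneg (show (0:ℤ) ≤ a by linarith) (sq_nonneg (V - U))]
  exact le_of_mul_le_mul_right h6 hVpos

set_option maxHeartbeats 1600000 in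
theorem stmt_17 (x y : ℚ) (hx : 0 < x) (hy : 0 ≤ y) :
    ¬ FinDivDominated (Set.range fun n : ℕ =>
        Real.sqrt ((x : ℝ) + ((y : ℝ) + n) ^ 2)) := by
  rintro ⟨s, hs⟩
  -- integer data
  set d : ℕ := x.den * y.den with hd
  have hdpos : 0 < d := Nat.mul_pos x.pos y.pos
  set b : ℕ := y.num.toNat * x.den with hbdef
  set a : ℕ := x.num.toNat * (x.den * y.den ^ 2) with hadef
  have hynum : ((y.num.toNat : ℤ)) = y.num := Int.toNat_of_nonneg (Rat.num_nonneg.mpr hy)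
  have hxnum : ((x.num.toNat : ℤ)) = x.num := Int.toNat_of_nonneg (Rat.num_nonneg.mpr hx.le)
  have hy_den : ((y.den : ℚ)) ≠ 0 := (Nat.cast_pos.mpr y.pos).ne'
  have hx_den : ((x.den : ℚ)) ≠ 0 := (Nat.cast_pos.mpr x.pos).ne'
  have h1y : ((y.num : ℚ)) = y * y.den := by
    have h := Rat.num_div_den y
    rw [div_eq_iff hy_den] at h
    exact h
  have h1x : ((x.num : ℚ)) = x * x.den := by
    have h := Rat.num_div_den x
    rw [div_eq_iff hx_den] at h
    exact h
  have h2y : ((y.num.toNat : ℚ)) = y * y.den := by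
    rw [← h1y]; exact_mod_cast hynum
  have h2x : ((x.num.toNat : ℚ)) = x * x.den := by
    rw [← h1x]; exact_mod_cast hxnum
  have hbq : (b : ℚ) = y * d := by
    show (((y.num.toNat * x.den : ℕ)) : ℚ) = y * ((x.den * y.den : ℕ) : ℚ)
    push_cast
    rw [h2y]; ring
  have haq : (a : ℚ) = x * (d : ℚ) ^ 2 := by
    show (((x.num.toNat * (x.den * y.den ^ 2) : ℕ)) : ℚ) = x * ((x.den * y.den : ℕ) : ℚ) ^ 2
    push_cast
    rw [h2x]; ring
  have hapos : 0 < a := by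
    have : 0 < x.num.toNat := by
      have := Rat.num_pos.mpr hx
      omega
    positivity
  -- the quadratic
  set f : ℕ → ℕ := fun n => (b + d * n) ^ 2 + a with hf
  have hfq : ∀ n : ℕ, (f n : ℚ) = (d : ℚ) ^ 2 * (x + ((y : ℚ) + n) ^ 2) := by
    intro n
    show (((b + d * n) ^ 2 + a : ℕ) : ℚ) = _
    push_cast
    rw [hbq, haq]; ring
  have hfr : ∀ n : ℕ, (f n : ℝ) = (d : ℝ) ^ 2 * ((x : ℝ) + ((y : ℝ) + n) ^ 2) := by
    intro n
    have := congrArg (fun q : ℚ => (q : ℝ)) (hfq n)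
    push_cast at this
    exact this
  have hposr : ∀ n : ℕ, (0:ℝ) < (x : ℝ) + ((y : ℝ) + n) ^ 2 := by
    intro n
    have hx' : (0:ℝ) < (x:ℝ) := by exact_mod_cast hx
    nlinarith [sq_nonneg ((y:ℝ) + n)]
  have hLpos : ∀ n : ℕ, 0 < Real.sqrt ((x : ℝ) + ((y : ℝ) + n) ^ 2) :=
    fun n => Real.sqrt_pos.mpr (hposr n)
  -- choose a class for each n
  have hsel : ∀ n : ℕ, ∃ t : ℝ, t ∈ s ∧ ∃ k : ℤ,
      Real.sqrt ((x : ℝ) + ((y : ℝ) + n) ^ 2) = k * t := by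
    intro n
    obtain ⟨t, ht, k, hk⟩ := hs _ ⟨n, rfl⟩
    exact ⟨t, ht, k, hk⟩
  choose g hg1 hg2 using hsel
  set m : ℕ := s.card with hm
  set N : ℕ := 2 * a * m + 1 with hN
  have hfn : ∀ n : ℕ, f n = (b + d * n) ^ 2 + a := fun _ => rfl
  clear_value f N m a b d
  -- two elements of the same class can't be close together
  have main : ∀ i j : ℕ, i < j → j ≤ m → g (N + i) = g (N + j) → False := by
    intro i j hij hjm heq
    set n : ℕ := N + i with hn
    set n' : ℕ := N + j with hn'
    clear_value n n'
    obtain ⟨k, hk⟩ := hg2 n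
    obtain ⟨k', hk'⟩ := hg2 n'
    rw [heq] at hk
    -- so both are multiples of t := g n'
    have hk0 : k ≠ 0 := by
      rintro rfl
      have hL := hLpos n
      rw [hk] at hL
      simp at hL
    have hk'0 : k' ≠ 0 := by
      rintro rfl
      have hL := hLpos n'
      rw [hk'] at hL
      simp at hL
    have hcross : Real.sqrt ((x : ℝ) + ((y : ℝ) + n) ^ 2) * (k' : ℝ)
        = Real.sqrt ((x : ℝ) + ((y : ℝ) + n') ^ 2) * (k : ℝ) := by
      rw [hk, hk']; ring
    have hsq : (f n : ℝ) * (k' : ℝ) ^ 2 = (f n' : ℝ) * (k : ℝ) ^ 2 := by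
      have e1 : Real.sqrt ((x : ℝ) + ((y : ℝ) + n) ^ 2) ^ 2
          = (x : ℝ) + ((y : ℝ) + n) ^ 2 := Real.sq_sqrt (hposr n).le
      have e2 : Real.sqrt ((x : ℝ) + ((y : ℝ) + n') ^ 2) ^ 2
          = (x : ℝ) + ((y : ℝ) + n') ^ 2 := Real.sq_sqrt (hposr n').le
      have := congrArg (fun z : ℝ => z ^ 2) hcross
      simp only [mul_pow] at this
      rw [e1, e2] at this
      rw [hfr n, hfr n']
      nlinarith [this]
    have hz : (f n : ℤ) * k' ^ 2 = (f n' : ℤ) * k ^ 2 := by exact_mod_cast hsq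
    set p : ℕ := k.natAbs with hpdef
    set q : ℕ := k'.natAbs with hqdef
    have hppos : 0 < p := Int.natAbs_pos.mpr hk0
    have hqpos : 0 < q := Int.natAbs_pos.mpr hk'0
    have hp2 : ((p : ℤ)) ^ 2 = k ^ 2 := by rw [← sq_abs k, Int.abs_eq_natAbs]
    have hq2 : ((q : ℤ)) ^ 2 = k' ^ 2 := by rw [← sq_abs k', Int.abs_eq_natAbs]
    have hnat : f n * q ^ 2 = f n' * p ^ 2 := by
      have : ((f n * q ^ 2 : ℕ) : ℤ) = ((f n' * p ^ 2 : ℕ) : ℤ) := by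
        push_cast
        rw [hq2, hp2]; exact hz
      exact_mod_cast this
    obtain ⟨β, κ, κ', hβpos, hκpos, hκ'pos, hA, hB⟩ :=
      factor_aux (f n) (f n') p q hppos hqpos (by rw [hfn n]; positivity) hnat
    rw [hfn n] at hA
    rw [hfn n'] at hB
    -- apply the key inequality over ℤ
    have h1 : ((b + d * n : ℕ) : ℤ) ^ 2 + (a : ℤ) = (β : ℤ) * (κ : ℤ) ^ 2 := by
      exact_mod_cast congrArg (fun t : ℕ => (t : ℤ)) hA
    have h2 : ((b + d * n' : ℕ) : ℤ) ^ 2 + (a : ℤ) = (β : ℤ) * (κ' : ℤ) ^ 2 := by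
      exact_mod_cast congrArg (fun t : ℕ => (t : ℤ)) hB
    have hUpos' : 1 ≤ b + d * n := by
      have h0 := Nat.mul_pos hdpos (show 0 < n by omega)
      omega
    have hUV' : b + d * n < b + d * n' := by
      have h0 : d * n < d * n' := mul_lt_mul_of_pos_left (show n < n' by omega) hdpos
      omega
    have hkey := key_ineq (a : ℤ) (β : ℤ) (κ : ℤ) (κ' : ℤ)
      ((b + d * n : ℕ) : ℤ) ((b + d * n' : ℕ) : ℤ)
      (by exact_mod_cast hapos) (by exact_mod_cast hUpos')
      (by exact_mod_cast hUV')
      (by exact_mod_cast hβpos) (by exact_mod_cast hκpos) (by exact_mod_cast hκ'pos)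
      h1 h2
    -- contradiction with size of N
    push_cast at hkey
    have hnz : ((n : ℕ) : ℤ) = (N : ℤ) + (i : ℤ) := by rw [hn]; push_cast; ring
    have hn'z : ((n' : ℕ) : ℤ) = (N : ℤ) + (j : ℤ) := by rw [hn']; push_cast; ring
    have hNz : ((N : ℕ) : ℤ) = 2 * (a : ℤ) * (m : ℤ) + 1 := by rw [hN]; push_cast; ring
    rw [hnz, hn'z, hNz] at hkey
    have hdz : (1:ℤ) ≤ (d:ℤ) := by exact_mod_cast hdpos
    have haz : (1:ℤ) ≤ (a:ℤ) := by exact_mod_cast hapos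
    have hjm' : (j:ℤ) ≤ (m:ℤ) := by exact_mod_cast hjm
    have hij' : (i:ℤ) ≤ (j:ℤ) := by exact_mod_cast hij.le
    have hiz : (0:ℤ) ≤ (i:ℤ) := Int.natCast_nonneg i
    have hbz : (0:ℤ) ≤ (b:ℤ) := Int.natCast_nonneg b
    have hint1 : (0:ℤ) ≤ 2 * (a:ℤ) * (d:ℤ) * ((m:ℤ) - ((j:ℤ) - (i:ℤ))) :=
      mul_nonneg (mul_nonneg (by linarith) (by linarith)) (by linarith)
    have hint2 : (0:ℤ) ≤ (d:ℤ) * (i:ℤ) := mul_nonneg (by linarith) hiz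
    clear * - hkey hdz haz hjm' hij' hiz hbz hint1 hint2
    linarith [hkey, hint1, hint2, hbz, hdz]
  -- pigeonhole
  obtain ⟨i, hi, j, hj, hne, hgij⟩ :=
    Finset.exists_ne_map_eq_of_card_lt_of_maps_to
      (s := Finset.range (m + 1)) (t := s)
      (by simp [hm]) (fun i _ => hg1 (N + i))
  rcases hne.lt_or_gt with h | h
  · exact main i j h (by simpa using Nat.lt_succ_iff.mp (Finset.mem_range.mp hj)) hgij
  · exact main j i h (by simpa using Nat.lt_succ_iff.mp (Finset.mem_range.mp hi)) hgij.symm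
end

section
/- Let n₀, q₀ be positive integers and x > 0, y ≥ 0 real numbers. Suppose there are infinitely many integers m > n₀ such that (x² + (y+m)²)/(x² + (y+n₀)²) = p²/q₀² for some positive integer p (depending on m). Then y and x² are rational. -/
theorem stmt_18 (n₀ q₀ : ℕ) (hn₀ : 0 < n₀) (hq₀ : 0 < q₀) (x y : ℝ)
    (hx : 0 < x) (hy : 0 ≤ y)
    (h : {m : ℤ | (n₀ : ℤ) < m ∧ ∃ p : ℕ, 0 < p ∧
        (x ^ 2 + (y + m) ^ 2) / (x ^ 2 + (y + n₀) ^ 2) =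
          (p : ℝ) ^ 2 / (q₀ : ℝ) ^ 2}.Infinite) :
    (∃ a : ℚ, (a : ℝ) = y) ∧ (∃ b : ℚ, (b : ℝ) = x ^ 2) := by
  set S := {m : ℤ | (n₀ : ℤ) < m ∧ ∃ p : ℕ, 0 < p ∧
        (x ^ 2 + (y + m) ^ 2) / (x ^ 2 + (y + n₀) ^ 2) =
          (p : ℝ) ^ 2 / (q₀ : ℝ) ^ 2} with hS
  have hD : (0:ℝ) < x ^ 2 + (y + (n₀:ℝ)) ^ 2 := by positivity
  have hQ : ((q₀:ℝ)) ^ 2 ≠ 0 := by positivity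
  have key : ∀ m ∈ S, ∃ p : ℕ, 0 < p ∧
      (x ^ 2 + (y + (m:ℝ)) ^ 2) * (q₀:ℝ) ^ 2
        = (p:ℝ) ^ 2 * (x ^ 2 + (y + (n₀:ℝ)) ^ 2) := by
    rintro m ⟨-, p, hp, heq⟩
    refine ⟨p, hp, ?_⟩
    rw [div_eq_div_iff hD.ne' (by positivity)] at heq
    exact heq
  choose! P hP1 hP2 using key
  obtain ⟨m₁, hm₁⟩ := h.nonempty
  have h2 : (S \ {m₁}).Infinite := h.diff (Set.finite_singleton _)
  obtain ⟨m₂, hm₂S, hm₂ne⟩ := h2.nonempty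
  simp only [Set.mem_singleton_iff] at hm₂ne
  by_cases hdeg : ∀ m ∈ S, ((m₁:ℝ) - m₂) * ((P m₁:ℝ) ^ 2 - (P m:ℝ) ^ 2)
      = ((m₁:ℝ) - m) * ((P m₁:ℝ) ^ 2 - (P m₂:ℝ) ^ 2)
  · -- degenerate case : contradiction
    exfalso
    have h3 : (S \ {m₁, m₂}).Infinite := h.diff (Set.toFinite _)
    obtain ⟨m₃, hm₃S, hm₃ne⟩ := h3.nonempty
    simp only [Set.mem_insert_iff, Set.mem_singleton_iff, not_or] at hm₃ne
    obtain ⟨hm₃1, hm₃2⟩ := hm₃ne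
    have E2 : ((m₂:ℝ) - m₁) * ((m₂:ℝ) + m₁ + 2*y) * (q₀:ℝ)^2
        = ((P m₂:ℝ)^2 - (P m₁:ℝ)^2) * (x ^ 2 + (y + (n₀:ℝ)) ^ 2) := by
      linear_combination (hP2 m₂ hm₂S) - (hP2 m₁ hm₁)
    have E3 : ((m₃:ℝ) - m₁) * ((m₃:ℝ) + m₁ + 2*y) * (q₀:ℝ)^2
        = ((P m₃:ℝ)^2 - (P m₁:ℝ)^2) * (x ^ 2 + (y + (n₀:ℝ)) ^ 2) := by
      linear_combination (hP2 m₃ hm₃S) - (hP2 m₁ hm₁)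
    have deg3 := hdeg m₃ hm₃S
    have contra : ((m₂:ℝ) - m₁) * ((m₃:ℝ) - m₁) * ((m₂:ℝ) - (m₃:ℝ)) * (q₀:ℝ)^2 = 0 := by
      linear_combination ((m₃:ℝ) - m₁) * E2 - ((m₂:ℝ) - m₁) * E3
        - (x ^ 2 + (y + (n₀:ℝ)) ^ 2) * deg3
    have hne1 : ((m₂:ℝ) - m₁) ≠ 0 := sub_ne_zero.2 (by exact_mod_cast hm₂ne)
    have hne2 : ((m₃:ℝ) - m₁) ≠ 0 := sub_ne_zero.2 (by exact_mod_cast hm₃1)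
    have hm₂₃ : m₂ ≠ m₃ := fun e => hm₃2 e.symm
    have hne3 : ((m₂:ℝ) - (m₃:ℝ)) ≠ 0 := sub_ne_zero.2 (by exact_mod_cast hm₂₃)
    rcases mul_eq_zero.1 contra with hc | hc
    · rcases mul_eq_zero.1 hc with hc | hc
      · rcases mul_eq_zero.1 hc with hc | hc
        · exact hne1 hc
        · exact hne2 hc
      · exact hne3 hc
    · exact hQ hc
  · push_neg at hdeg
    obtain ⟨m₃, hm₃S, hδ⟩ := hdeg
    have E2 : ((m₂:ℝ) - m₁) * ((m₂:ℝ) + m₁ + 2*y) * (q₀:ℝ)^2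
        = ((P m₂:ℝ)^2 - (P m₁:ℝ)^2) * (x ^ 2 + (y + (n₀:ℝ)) ^ 2) := by
      linear_combination (hP2 m₂ hm₂S) - (hP2 m₁ hm₁)
    have E3 : ((m₃:ℝ) - m₁) * ((m₃:ℝ) + m₁ + 2*y) * (q₀:ℝ)^2
        = ((P m₃:ℝ)^2 - (P m₁:ℝ)^2) * (x ^ 2 + (y + (n₀:ℝ)) ^ 2) := by
      linear_combination (hP2 m₃ hm₃S) - (hP2 m₁ hm₁)
    obtain ⟨δ, hδdef⟩ : ∃ δ : ℚ, δ = ((m₂:ℚ) - m₁) * ((P m₃:ℚ)^2 - (P m₁:ℚ)^2)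
        - ((m₃:ℚ) - m₁) * ((P m₂:ℚ)^2 - (P m₁:ℚ)^2) := ⟨_, rfl⟩
    have hδRe : ((δ:ℚ):ℝ) = ((m₂:ℝ) - m₁) * ((P m₃:ℝ)^2 - (P m₁:ℝ)^2)
        - ((m₃:ℝ) - m₁) * ((P m₂:ℝ)^2 - (P m₁:ℝ)^2) := by
      rw [hδdef]; push_cast; ring
    have hδR : ((δ:ℚ):ℝ) ≠ 0 := by
      rw [hδRe]; intro h0; apply hδ; linarith
    obtain ⟨a, hadef⟩ : ∃ a : ℚ, a = (((m₃:ℚ) - m₁) * ((m₃:ℚ) + m₁) * ((P m₂:ℚ)^2 - (P m₁:ℚ)^2)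
        - ((m₂:ℚ) - m₁) * ((m₂:ℚ) + m₁) * ((P m₃:ℚ)^2 - (P m₁:ℚ)^2)) / (2 * δ) := ⟨_, rfl⟩
    have hay : (a : ℝ) = y := by
      have h2δ : (2 * ((δ:ℚ):ℝ)) ≠ 0 := by positivity
      have hkey : (y * (2 * ((δ:ℚ):ℝ))) * (q₀:ℝ)^2
          = (((m₃:ℝ) - m₁) * ((m₃:ℝ) + m₁) * ((P m₂:ℝ)^2 - (P m₁:ℝ)^2)
            - ((m₂:ℝ) - m₁) * ((m₂:ℝ) + m₁) * ((P m₃:ℝ)^2 - (P m₁:ℝ)^2)) * (q₀:ℝ)^2 := by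
        rw [hδRe]
        linear_combination ((P m₃:ℝ)^2 - (P m₁:ℝ)^2) * E2 - ((P m₂:ℝ)^2 - (P m₁:ℝ)^2) * E3
      have hkey2 := mul_right_cancel₀ hQ hkey
      rw [hadef]
      push_cast
      rw [div_eq_iff (by positivity)]
      linarith [hkey2]
    have hDval : (x ^ 2 + (y + (n₀:ℝ)) ^ 2)
        = (((m₂:ℝ) - m₁) * ((m₃:ℝ) - m₁) * ((m₃:ℝ) - (m₂:ℝ)) * (q₀:ℝ)^2)
          / ((δ:ℚ):ℝ) := by
      rw [eq_div_iff hδR, hδRe]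
      linear_combination ((m₃:ℝ) - m₁) * E2 - ((m₂:ℝ) - m₁) * E3
    obtain ⟨b, hbdef⟩ : ∃ b : ℚ, b = (((m₂:ℚ) - m₁) * ((m₃:ℚ) - m₁) * ((m₃:ℚ) - (m₂:ℚ)) * (q₀:ℚ)^2) / δ
        - (a + (n₀:ℚ))^2 := ⟨_, rfl⟩
    refine ⟨⟨a, hay⟩, ⟨b, ?_⟩⟩
    have hbx : (b:ℝ) = (x ^ 2 + (y + (n₀:ℝ)) ^ 2) - (y + (n₀:ℝ))^2 := by
      rw [hbdef, hDval]
      push_cast [hay]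
      ring
    rw [hbx]; ring
end

section
/- Let G be a group acting properly by semi-simple isometries on a CAT(0) space X, and suppose G has BVC. Then the set L = {|g| : g ∈ G} of translation lengths of elements of G is finitely divisor dominated, i.e., contained in a finite union of sets of the form ℤ·x with x ∈ ℝ. -/
/-- A metric space is CAT(0) if every pair of points has a midpoint satisfying the
CN inequality of Bruhat--Tits (this characterizes CAT(0) among geodesic spaces). -/
def IsCAT0 (X : Type*) [MetricSpace X] : Prop :=
  ∀ x y : X, ∃ m : X, dist x m = dist x y / 2 ∧ dist y m = dist x y / 2 ∧
    ∀ z : X, dist z m ^ 2 ≤ (dist z x ^ 2 + dist z y ^ 2) / 2 - dist x y ^ 2 / 4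

/-- The translation length of an isometry. -/
noncomputable def translationLength {X : Type*} [MetricSpace X] (f : X ≃ᵢ X) : ℝ :=
  ⨅ x : X, dist (f x) x

set_option linter.unusedSectionVars false

section Geom
variable {X : Type*} [MetricSpace X] [Nonempty X]

private def IsCNMid (x y m : X) : Prop :=
  dist x m = dist x y / 2 ∧ dist y m = dist x y / 2 ∧
    ∀ z : X, dist z m ^ 2 ≤ (dist z x ^ 2 + dist z y ^ 2) / 2 - dist x y ^ 2 / 4

private lemma tl_le (f : X ≃ᵢ X) (x : X) : translationLength f ≤ dist (f x) x :=
  ciInf_le ⟨0, by rintro _ ⟨y, rfl⟩; exact dist_nonneg⟩ x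

private lemma tl_nonneg (f : X ≃ᵢ X) : 0 ≤ translationLength f :=
  le_ciInf fun _ => dist_nonneg

private lemma tl_inv (f : X ≃ᵢ X) : translationLength f⁻¹ = translationLength f := by
  unfold translationLength
  refine iInf_congr fun y => ?_
  have h1 : dist (f⁻¹ y) y = dist (f (f⁻¹ y)) (f y) := (f.dist_eq _ _).symm
  have h2 : f (f⁻¹ y) = y := f.apply_symm_apply y
  rw [h1, h2, dist_comm]

private lemma cnmid_unique {x y m m' : X} (h : IsCNMid x y m)
    (h1 : dist x m' = dist x y / 2) (h2 : dist y m' = dist x y / 2) : m' = m := by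
  have hcn := h.2.2 m'
  rw [dist_comm m' x, h1, dist_comm m' y, h2] at hcn
  have : dist m' m = 0 := le_antisymm (by nlinarith [dist_nonneg (x := m') (y := m)]) dist_nonneg
  exact dist_eq_zero.mp this

private lemma cnmid_map (f : X ≃ᵢ X) {x y m : X} (h : IsCNMid x y m) :
    IsCNMid (f x) (f y) (f m) := by
  refine ⟨by rw [f.dist_eq, f.dist_eq]; exact h.1, by rw [f.dist_eq, f.dist_eq]; exact h.2.1, ?_⟩
  intro z
  have hz := h.2.2 (f⁻¹ z)
  have e : ∀ a : X, dist z (f a) = dist (f⁻¹ z) a := by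
    intro a
    have h0 : f (f⁻¹ z) = z := f.apply_symm_apply z
    calc dist z (f a) = dist (f (f⁻¹ z)) (f a) := by rw [h0]
      _ = dist (f⁻¹ z) a := f.dist_eq _ _
  rw [e x, e y, e m, f.dist_eq]
  exact hz

private lemma pow_apply_succ (f : X ≃ᵢ X) (j : ℕ) (y : X) :
    (f^(j+1)) y = f ((f^j) y) := by rw [pow_succ']; rfl

private lemma chain_le (f : X ≃ᵢ X) (y : X) : ∀ j : ℕ, dist ((f^j) y) y ≤ j * dist (f y) y := by
  intro j
  induction j with
  | zero => simp
  | succ n ih =>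
    have : dist ((f^(n+1)) y) y ≤ dist ((f^(n+1)) y) (f y) + dist (f y) y := dist_triangle _ _ _
    have e : dist ((f^(n+1)) y) (f y) = dist ((f^n) y) y := by
      rw [pow_apply_succ, f.dist_eq]
    push_cast
    rw [e] at this
    nlinarith [ih]

private lemma orbit_disp (f : X ≃ᵢ X) (x : X) (p : ℕ) :
    dist (f ((f^p) x)) ((f^p) x) = dist (f x) x := by
  induction p with
  | zero => simp
  | succ n ih =>
    rw [pow_apply_succ, f.dist_eq]
    exact ih

private lemma two_step (hX : IsCAT0 X) (f : X ≃ᵢ X) {x' : X}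
    (hmin : dist (f x') x' = translationLength f) :
    dist (f (f x')) x' = 2 * translationLength f := by
  set ℓ := translationLength f with hℓ
  obtain ⟨m, hm1, hm2, hm3⟩ := hX x' (f x')
  have hM : IsCNMid x' (f x') m := ⟨hm1, hm2, hm3⟩
  have hMf : IsCNMid (f x') (f (f x')) (f m) := cnmid_map f hM
  set D := dist (f (f x')) x' with hD
  have hxfx : dist x' (f x') = ℓ := by rw [dist_comm]; exact hmin
  have hfd : dist (f x') (f (f x')) = ℓ := by
    rw [f.dist_eq, dist_comm]; exact hmin
  have hm1' : dist x' m = ℓ / 2 := by rw [hm1, hxfx]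
  -- CN for (f x', f (f x')) with midpoint f m, z := x'
  have h1 := hMf.2.2 x'
  rw [hfd, hxfx] at h1
  have hxffx : dist x' (f (f x')) = D := dist_comm x' (f (f x')) ▸ rfl
  rw [hxffx, dist_comm x' (f m)] at h1
  -- CN for (x', f x') with midpoint m, z := f m
  have h2 := hM.2.2 (f m)
  rw [hxfx] at h2
  have hfmfx : dist (f m) (f x') = ℓ / 2 := by
    rw [f.dist_eq, dist_comm]; exact hm1'
  rw [hfmfx] at h2
  have h3 : ℓ ≤ dist (f m) m := tl_le f m
  have hl0 : 0 ≤ ℓ := tl_nonneg f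
  have hD0 : 0 ≤ D := dist_nonneg
  have hDle : D ≤ 2 * ℓ := by
    have ht := dist_triangle (f (f x')) (f x') x'
    have e : dist (f (f x')) (f x') = ℓ := by rw [f.dist_eq]; exact hmin
    rw [e, hmin] at ht
    linarith
  have e1 : ℓ ^ 2 ≤ dist (f m) m ^ 2 := pow_le_pow_left₀ hl0 h3 2
  have hsq : 4 * ℓ ^ 2 ≤ D ^ 2 := by nlinarith [h1, h2, e1]
  have hDge : 2 * ℓ ≤ D := by nlinarith [hsq, hD0, hl0]
  linarith

private lemma orbit_eq (hX : IsCAT0 X) (f : X ≃ᵢ X) {x : X}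
    (hmin : dist (f x) x = translationLength f) :
    ∀ p : ℕ, dist ((f^p) x) x = p * translationLength f := by
  set ℓ := translationLength f with hℓ
  have hl0 : 0 ≤ ℓ := tl_nonneg f
  have hdisp : ∀ q : ℕ, dist (f ((f^q) x)) ((f^q) x) = ℓ := fun q => by
    rw [orbit_disp]; exact hmin
  have htwo : ∀ q : ℕ, dist (f (f ((f^q) x))) ((f^q) x) = 2 * ℓ := fun q =>
    two_step hX f (hdisp q)
  have key : ∀ p : ℕ, dist ((f^p) x) x = p * ℓ ∧ dist ((f^(p+1)) x) x = p * ℓ + ℓ := by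
    intro p
    induction p with
    | zero =>
      constructor
      · simp
      · simp only [Nat.cast_zero, zero_mul, zero_add, pow_one]; exact hmin
    | succ n ih =>
      obtain ⟨ih1, ih2⟩ := ih
      refine ⟨by push_cast; linarith [ih2], ?_⟩
      -- f^(n+1) x is the CN midpoint of (f^n x, f^(n+2) x)
      obtain ⟨m, hm1, hm2, hm3⟩ := hX ((f^n) x) ((f^(n+2)) x)
      have hd2 : dist ((f^n) x) ((f^(n+2)) x) = 2 * ℓ := by
        have := htwo n
        rw [dist_comm]
        calc dist ((f^(n+2)) x) ((f^n) x) = dist (f (f ((f^n) x))) ((f^n) x) := by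
              rw [show (f^(n+2)) x = f (f ((f^n) x)) by
                rw [pow_apply_succ, pow_apply_succ]]
        _ = 2 * ℓ := this
      have hM : IsCNMid ((f^n) x) ((f^(n+2)) x) m := ⟨hm1, hm2, hm3⟩
      have hma : dist ((f^n) x) ((f^(n+1)) x) = ℓ := by
        rw [pow_apply_succ, dist_comm]
        exact hdisp n
      have hmb : dist ((f^(n+2)) x) ((f^(n+1)) x) = ℓ := by
        rw [pow_apply_succ]
        exact hdisp (n+1)
      have hmid : (f^(n+1)) x = m := by
        refine cnmid_unique hM ?_ ?_
        · rw [hd2, hma]; ring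
        · rw [hd2, hmb]; ring
      have hcn := hM.2.2 x
      rw [← hmid] at hcn
      rw [dist_comm x ((f^n) x), dist_comm x ((f^(n+1)) x), dist_comm x ((f^(n+2)) x)] at hcn
      rw [ih1, ih2, hd2] at hcn
      have hup : dist ((f^(n+2)) x) x ≤ (n:ℝ) * ℓ + ℓ + ℓ := by
        have ht := dist_triangle ((f^(n+2)) x) ((f^(n+1)) x) x
        rw [hmb, ih2] at ht
        linarith
      have hdn : 0 ≤ dist ((f^(n+2)) x) x := dist_nonneg
      have hn0 : (0:ℝ) ≤ (n:ℝ) := Nat.cast_nonneg n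
      have hsq : ((n:ℝ) * ℓ + ℓ + ℓ)^2 ≤ dist ((f^(n+2)) x) x ^ 2 := by nlinarith [hcn]
      have hge : (n:ℝ) * ℓ + ℓ + ℓ ≤ dist ((f^(n+2)) x) x := by
        nlinarith [hsq, hdn, mul_nonneg hn0 hl0, hl0]
      have : dist ((f^(n+1+1)) x) x = dist ((f^(n+2)) x) x := by norm_num
      rw [this]
      push_cast
      linarith
  intro p
  exact (key p).1

private lemma tl_pow (hX : IsCAT0 X) (f : X ≃ᵢ X) {x : X}
    (hmin : dist (f x) x = translationLength f) (n : ℕ) :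
    translationLength (f^n) = n * translationLength f := by
  set ℓ := translationLength f with hℓ
  have horb := orbit_eq hX f hmin
  have hle : translationLength (f^n) ≤ n * ℓ := by
    have := tl_le (f^n) x
    rw [horb n] at this
    exact this
  have hge : (n:ℝ) * ℓ ≤ translationLength (f^n) := by
    refine le_ciInf fun y => ?_
    by_contra hcon
    push_neg at hcon
    set d := dist ((f^n) y) y with hd
    have hδ : 0 < (n:ℝ) * ℓ - d := by linarith
    obtain ⟨j, hj⟩ := exists_nat_gt ((2 * dist x y) / ((n:ℝ) * ℓ - d))
    have hj' : 2 * dist x y < (j:ℝ) * ((n:ℝ) * ℓ - d) := by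
      rw [div_lt_iff₀ hδ] at hj
      linarith
    have hkey : (j:ℝ) * ((n:ℝ) * ℓ) ≤ 2 * dist x y + (j:ℝ) * d := by
      have h1 : dist ((f^(n*j)) x) x = (n*j : ℕ) * ℓ := horb (n*j)
      have h2 : dist ((f^(n*j)) y) y ≤ (j:ℝ) * d := by
        have := chain_le (f^n) y j
        rw [← pow_mul] at this
        exact this
      have h3 : dist ((f^(n*j)) x) x ≤ dist ((f^(n*j)) x) ((f^(n*j)) y)
          + dist ((f^(n*j)) y) y + dist y x := by
        calc dist ((f^(n*j)) x) x ≤ dist ((f^(n*j)) x) y + dist y x := dist_triangle _ _ _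
          _ ≤ (dist ((f^(n*j)) x) ((f^(n*j)) y) + dist ((f^(n*j)) y) y) + dist y x := by
              linarith [dist_triangle ((f^(n*j)) x) ((f^(n*j)) y) y]
      have h4 : dist ((f^(n*j)) x) ((f^(n*j)) y) = dist x y := (f^(n*j)).dist_eq x y
      rw [h1, h4] at h3
      have : ((n*j : ℕ) : ℝ) = (n:ℝ) * (j:ℝ) := by push_cast; ring
      rw [this] at h3
      rw [dist_comm y x] at h3
      nlinarith [h2, h3]
    nlinarith [hkey, hj']
  linarith

private lemma tl_conj (u w : X ≃ᵢ X) :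
    translationLength (u * w * u⁻¹) = translationLength w := by
  have hpt : ∀ y : X, dist ((u * w * u⁻¹) y) y = dist (w (u⁻¹ y)) (u⁻¹ y) := by
    intro y
    have h1 : (u * w * u⁻¹) y = u (w (u⁻¹ y)) := rfl
    have h2 : u (u⁻¹ y) = y := u.apply_symm_apply y
    calc dist ((u * w * u⁻¹) y) y = dist (u (w (u⁻¹ y))) (u (u⁻¹ y)) := by rw [h1, h2]
      _ = dist (w (u⁻¹ y)) (u⁻¹ y) := u.dist_eq _ _
  refine le_antisymm ?_ ?_
  · refine le_ciInf fun y => ?_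
    have := tl_le (u * w * u⁻¹) (u y)
    rw [hpt (u y)] at this
    have e : u⁻¹ (u y) = y := u.symm_apply_apply y
    rw [e] at this
    exact this
  · refine le_ciInf fun y => ?_
    rw [hpt y]
    exact tl_le w _

private lemma tl_zpow (hX : IsCAT0 X) (f : X ≃ᵢ X) {x : X}
    (hmin : dist (f x) x = translationLength f) (k : ℤ) :
    translationLength (f^k) = (k.natAbs : ℝ) * translationLength f := by
  rcases Int.eq_nat_or_neg k with ⟨n, rfl | rfl⟩
  · rw [zpow_natCast, Int.natAbs_natCast]
    exact tl_pow hX f hmin n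
  · rw [zpow_neg, zpow_natCast, tl_inv, Int.natAbs_neg, Int.natAbs_natCast]
    exact tl_pow hX f hmin n

end Geom

section Grp

variable {G X : Type*} [Group G] [MetricSpace X] [Nonempty X]

private lemma subgroup_lengths (hX : IsCAT0 X) (ρ : G →* (X ≃ᵢ X))
    (hss : ∀ g : G, ∃ x : X, dist (ρ g x) x = translationLength (ρ g))
    (V : Subgroup G) :
    ∃ xV : ℝ, IsVirtuallyCyclic V → ∀ w : G, w ∈ V →
      ∃ K : ℤ, translationLength (ρ w) = K * xV := by
  by_cases hvc : IsVirtuallyCyclic V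
  · obtain ⟨H, Hcyc, Hfi⟩ := hvc
    obtain ⟨h₀, hh₀⟩ := Hcyc.exists_generator
    set n := H.index with hn
    have hn0 : n ≠ 0 := Hfi.index_ne_zero
    set hG : G := ((h₀ : V) : G) with hhG
    refine ⟨translationLength (ρ hG) / (n.factorial), fun _ w hw => ?_⟩
    set v : V := ⟨w, hw⟩ with hv
    haveI := Hfi
    haveI : Fintype (V ⧸ H) := Fintype.ofFinite _
    have hcard : Fintype.card (V ⧸ H) = n := by
      rw [← Nat.card_eq_fintype_card]
      exact (Subgroup.index_eq_card H).symm
    obtain ⟨i, j, hij, hjn, heq⟩ : ∃ i j : ℕ, i < j ∧ j < n + 1 ∧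
        ((v^i : V) : V ⧸ H) = ((v^j : V) : V ⧸ H) := by
      obtain ⟨a, ha, b, hb, hne, heq⟩ :=
        Finset.exists_ne_map_eq_of_card_lt_of_maps_to
          (s := Finset.range (n+1)) (t := Finset.univ)
          (by rw [Finset.card_univ, hcard, Finset.card_range]; omega)
          (f := fun j => ((v^j : V) : V ⧸ H)) (fun a _ => Finset.mem_univ _)
      rcases hne.lt_or_gt with h | h
      · exact ⟨a, b, h, Finset.mem_range.mp hb, heq⟩
      · exact ⟨b, a, h, Finset.mem_range.mp ha, heq.symm⟩
    set m := j - i with hm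
    have hm0 : 0 < m := Nat.sub_pos_of_lt hij
    have hmn : m ≤ n := by omega
    have hvm : v^m ∈ H := by
      have h1 : (v^i)⁻¹ * v^j ∈ H := QuotientGroup.eq.mp heq
      have h2 : v^i * v^m = v^j := by rw [← pow_add]; congr 1; omega
      have h3 : v^m = (v^i)⁻¹ * v^j := by rw [← h2, inv_mul_cancel_left]
      rw [h3]; exact h1
    obtain ⟨k, hk⟩ := Subgroup.mem_zpowers_iff.mp (hh₀ ⟨v^m, hvm⟩)
    have hrel : w^m = hG^k := by
      have h1 : ((h₀^k : H) : V) = v^m := by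
        rw [hk]
      have h2 : (((h₀^k : H) : V) : G) = ((v^m : V) : G) := by rw [h1]
      rw [SubgroupClass.coe_zpow, SubgroupClass.coe_pow] at h2
      rw [SubgroupClass.coe_zpow] at h2
      exact h2.symm
    obtain ⟨xw, hxw⟩ := hss w
    obtain ⟨xh, hxh⟩ := hss hG
    have e1 : translationLength (ρ (w^m)) = (m:ℝ) * translationLength (ρ w) := by
      rw [map_pow]; exact tl_pow hX (ρ w) hxw m
    have e2 : translationLength (ρ (hG^k)) = (k.natAbs : ℝ) * translationLength (ρ hG) := by
      rw [map_zpow]; exact tl_zpow hX (ρ hG) hxh k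
    have e3 : (m:ℝ) * translationLength (ρ w)
        = (k.natAbs : ℝ) * translationLength (ρ hG) := by
      rw [← e1, ← e2, hrel]
    obtain ⟨c, hc⟩ := Nat.dvd_factorial hm0 hmn
    refine ⟨((k.natAbs * c : ℕ) : ℤ), ?_⟩
    have hmne : (m:ℝ) ≠ 0 := Nat.cast_ne_zero.mpr (by omega)
    have hfne : ((n.factorial : ℕ) : ℝ) ≠ 0 :=
      Nat.cast_ne_zero.mpr (Nat.factorial_pos n).ne'
    have hcr : ((n.factorial : ℕ) : ℝ) = (m:ℝ) * (c:ℝ) := by rw [hc]; push_cast; ring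
    have habs : (((k.natAbs * c : ℕ) : ℤ) : ℝ) = ((k.natAbs : ℕ) : ℝ) * (c : ℝ) := by
      rw [Int.cast_natCast, Nat.cast_mul]
    rw [habs, ← mul_div_assoc, eq_div_iff hfne, hcr]
    calc translationLength (ρ w) * ((m:ℝ) * (c:ℝ))
        = ((m:ℝ) * translationLength (ρ w)) * (c:ℝ) := by ring
      _ = ((k.natAbs : ℝ) * translationLength (ρ hG)) * (c:ℝ) := by rw [e3]
      _ = ((k.natAbs : ℕ) : ℝ) * (c:ℝ) * translationLength (ρ hG) := by ring
  · exact ⟨0, fun h => absurd h hvc⟩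

end Grp

theorem stmt_19 {G X : Type*} [Group G] [MetricSpace X] [Nonempty X]
    (hX : IsCAT0 X) (ρ : G →* (X ≃ᵢ X))
    (hproper : ∀ (x : X) (r : ℝ), {g : G | dist (ρ g x) x ≤ r}.Finite)
    (hss : ∀ g : G, ∃ x : X, dist (ρ g x) x = translationLength (ρ g))
    (hbvc : HasBVC G) :
    FinDivDominated (Set.range fun g : G => translationLength (ρ g)) := by
  obtain ⟨S, hS1, hS2⟩ := hbvc
  choose F hF using subgroup_lengths hX ρ hss
  refine ⟨S.image F, ?_⟩
  rintro a ⟨g, rfl⟩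
  have Wvc : IsVirtuallyCyclic (Subgroup.zpowers g) := by
    have hcy : IsCyclic (Subgroup.zpowers g) := by
      refine ⟨⟨⟨g, Subgroup.mem_zpowers g⟩, fun x => ?_⟩⟩
      obtain ⟨k, hk⟩ := Subgroup.mem_zpowers_iff.mp x.2
      refine Subgroup.mem_zpowers_iff.mpr ⟨k, ?_⟩
      apply Subtype.ext
      rw [SubgroupClass.coe_zpow]
      exact hk
    refine ⟨⊤, ?_, ⟨by simp [Subgroup.index_top]⟩⟩
    exact isCyclic_of_surjective Subgroup.topEquiv.symm.toMonoidHom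
      (MulEquiv.surjective _)
  obtain ⟨V, hVS, c, hle⟩ := hS2 _ Wvc
  have hmem : c * g * c⁻¹ ∈ V := by
    have h1 := Subgroup.mem_map_of_mem (K := Subgroup.zpowers g)
      (MulAut.conj c).toMonoidHom (Subgroup.mem_zpowers g)
    have h2 := hle h1
    simpa [MulAut.conj_apply] using h2
  obtain ⟨K, hK⟩ := hF V (hS1 V hVS) _ hmem
  refine ⟨F V, Finset.mem_image_of_mem F hVS, K, ?_⟩
  rw [← hK]
  have hρ : ρ (c * g * c⁻¹) = ρ c * ρ g * (ρ c)⁻¹ := by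
    rw [map_mul, map_mul, map_inv]
  rw [hρ, tl_conj]
end
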